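/- arXiv:2405.08256 — 8 statements merged into one kernel-verified Lean document; each statement's English description precedes it below -/
import Mathlib

section
/- In ℤ[v_1,v_2,v_3,v_4], the polynomials α_2 = 8σ_2 − 3σ_1², α_3 = 8σ_3 − 4σ_1σ_2 + σ_1³, α_4 = 12σ_4 − 3σ_1σ_3 + σ_2², and α_6 = 27σ_1²σ_4 + 27σ_3² − 9σ_1σ_2σ_3 − 72σ_2σ_4 + 2σ_2³ all lie in the kernel of ∇ = Σ_{i=1}^4 ∂/∂v_i. -/
open MvPolynomial

noncomputable def sig (k : ℕ) : MvPolynomial (Fin 4) ℤ := esymm (Fin 4) ℤ k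

noncomputable def nabla (f : MvPolynomial (Fin 4) ℤ) : MvPolynomial (Fin 4) ℤ :=
  ∑ i : Fin 4, pderiv i f

noncomputable def alpha2 : MvPolynomial (Fin 4) ℤ := 8 * sig 2 - 3 * sig 1 ^ 2
noncomputable def alpha3 : MvPolynomial (Fin 4) ℤ := 8 * sig 3 - 4 * sig 1 * sig 2 + sig 1 ^ 3
noncomputable def alpha4 : MvPolynomial (Fin 4) ℤ := 12 * sig 4 - 3 * sig 1 * sig 3 + sig 2 ^ 2
noncomputable def alpha6 : MvPolynomial (Fin 4) ℤ :=
  27 * sig 1 ^ 2 * sig 4 + 27 * sig 3 ^ 2 - 9 * sig 1 * sig 2 * sig 3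
    - 72 * sig 2 * sig 4 + 2 * sig 2 ^ 3

lemma sig1 : sig 1 = X 0 + X 1 + X 2 + X 3 := by
  rw [sig, esymm]
  rw [show Finset.powersetCard 1 (Finset.univ : Finset (Fin 4)) = {{0},{1},{2},{3}} from by decide]
  repeat rw [Finset.sum_insert (by decide)]
  rw [Finset.sum_singleton]
  repeat rw [Finset.prod_singleton]
  ring

lemma sig2 : sig 2 = X 0 * X 1 + X 0 * X 2 + X 0 * X 3 + X 1 * X 2 + X 1 * X 3 + X 2 * X 3 := by
  rw [sig, esymm]
  rw [show Finset.powersetCard 2 (Finset.univ : Finset (Fin 4)) =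
      {{0,1},{0,2},{0,3},{1,2},{1,3},{2,3}} from by decide]
  repeat rw [Finset.sum_insert (by decide)]
  rw [Finset.sum_singleton]
  repeat rw [Finset.prod_insert (by decide)]
  repeat rw [Finset.prod_singleton]
  ring

lemma sig3 : sig 3 = X 0 * X 1 * X 2 + X 0 * X 1 * X 3 + X 0 * X 2 * X 3 + X 1 * X 2 * X 3 := by
  rw [sig, esymm]
  rw [show Finset.powersetCard 3 (Finset.univ : Finset (Fin 4)) =
      {{0,1,2},{0,1,3},{0,2,3},{1,2,3}} from by decide]
  repeat rw [Finset.sum_insert (by decide)]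
  rw [Finset.sum_singleton]
  repeat rw [Finset.prod_insert (by decide)]
  repeat rw [Finset.prod_singleton]
  ring

lemma sig4 : sig 4 = X 0 * X 1 * X 2 * X 3 := by
  rw [sig, esymm]
  rw [show Finset.powersetCard 4 (Finset.univ : Finset (Fin 4)) = {{0,1,2,3}} from by decide]
  rw [Finset.sum_singleton]
  repeat rw [Finset.prod_insert (by decide)]
  repeat rw [Finset.prod_singleton]
  ring


lemma nabla_add (p q : MvPolynomial (Fin 4) ℤ) : nabla (p + q) = nabla p + nabla q := by
  simp [nabla, Finset.sum_add_distrib]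

lemma nabla_sub (p q : MvPolynomial (Fin 4) ℤ) : nabla (p - q) = nabla p - nabla q := by
  simp [nabla, Finset.sum_sub_distrib]

lemma nabla_mul (p q : MvPolynomial (Fin 4) ℤ) : nabla (p * q) = nabla p * q + p * nabla q := by
  simp only [nabla, pderiv_mul, Finset.sum_add_distrib, Finset.sum_mul, Finset.mul_sum]

lemma pderiv_ofNat' (i : Fin 4) (n : ℕ) [n.AtLeastTwo] :
    pderiv i (no_index (OfNat.ofNat n) : MvPolynomial (Fin 4) ℤ) = 0 := by
  rw [← map_ofNat (C : ℤ →+* MvPolynomial (Fin 4) ℤ) n]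
  exact pderiv_C

lemma nabla_ofNat (n : ℕ) [n.AtLeastTwo] :
    nabla (no_index (OfNat.ofNat n) : MvPolynomial (Fin 4) ℤ) = 0 := by
  simp [nabla, pderiv_ofNat']

lemma nabla_sig1 : nabla (sig 1) = 4 := by
  simp only [nabla, sig1, Fin.sum_univ_four, map_add, pderiv_X, Pi.single_apply]
  simp
  try ring

lemma nabla_sig2 : nabla (sig 2) = 3 * sig 1 := by
  simp only [nabla, sig1, sig2, Fin.sum_univ_four, map_add, pderiv_mul, pderiv_X,
    Pi.single_apply]
  simp
  try ring

lemma nabla_sig3 : nabla (sig 3) = 2 * sig 2 := by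
  simp only [nabla, sig2, sig3, Fin.sum_univ_four, map_add, pderiv_mul, pderiv_X,
    Pi.single_apply]
  simp
  try ring

lemma nabla_sig4 : nabla (sig 4) = sig 3 := by
  simp only [nabla, sig3, sig4, Fin.sum_univ_four, map_add, pderiv_mul, pderiv_X,
    Pi.single_apply]
  simp
  try ring

/-- α_2, α_3, α_4, α_6 all lie in the kernel of ∇ = Σ_{i=1}^4 ∂/∂v_i. -/
theorem alphas_in_ker_nabla :
    nabla alpha2 = 0 ∧ nabla alpha3 = 0 ∧ nabla alpha4 = 0 ∧ nabla alpha6 = 0 := by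
  refine ⟨?_, ?_, ?_, ?_⟩ <;>
  · simp only [alpha2, alpha3, alpha4, alpha6, pow_succ, pow_zero, one_mul]
    simp only [nabla_add, nabla_sub, nabla_mul, nabla_ofNat, nabla_sig1, nabla_sig2,
      nabla_sig3, nabla_sig4]
    ring
end

section
/- The ring homomorphism from ℤ[y_2,y_3,y_4,y_6] to ℤ[v_1,…,v_4] sending y_2 ↦ α_2, y_3 ↦ α_3, y_4 ↦ α_4, y_6 ↦ α_6 has kernel equal to the principal ideal generated by 64y_6 − y_2³ − 27y_3² + 48y_2y_4. -/
open MvPolynomial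

namespace KerAlpha

noncomputable section

abbrev Rz := MvPolynomial (Fin 4) ℤ
abbrev Rq := MvPolynomial (Fin 4) ℚ
abbrev R3 := MvPolynomial (Fin 3) ℚ

def g : Rz := 64 * X 3 - X 0 ^ 3 - 27 * X 1 ^ 2 + 48 * X 0 * X 2

def toQ : Rz →+* Rq := map (Int.castRingHom ℚ)

def φ : Rz →ₐ[ℤ] Rz := aeval ![alpha2, alpha3, alpha4, alpha6]

def a2 : Rq := toQ alpha2
def a3 : Rq := toQ alpha3
def a4 : Rq := toQ alpha4
def a6 : Rq := toQ alpha6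

def φq : Rq →ₐ[ℚ] Rq := aeval ![a2, a3, a4, a6]

def gq : Rq := 64 * X 3 - X 0 ^ 3 - 27 * X 1 ^ 2 + 48 * X 0 * X 2

lemma toQ_g : toQ g = gq := by
  simp [toQ, g, gq]

lemma phi_g : φ g = 0 := by
  have : φ g = 64 * alpha6 - alpha2 ^ 3 - 27 * alpha3 ^ 2 + 48 * alpha2 * alpha4 := by
    simp [φ, g, map_ofNat]
  rw [this, alpha2, alpha3, alpha4, alpha6]
  ring

lemma phiq_gq : φq gq = 0 := by
  have : φq gq = 64 * a6 - a2 ^ 3 - 27 * a3 ^ 2 + 48 * a2 * a4 := by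
    simp [φq, gq, map_ofNat]
  rw [this, a2, a3, a4, a6, alpha2, alpha3, alpha4, alpha6, toQ]
  push_cast [map_sub, map_add, map_mul, map_pow, map_ofNat]
  ring

lemma toQ_phi (p : Rz) : toQ (φ p) = φq (toQ p) := by
  have h : toQ.comp (φ : Rz →+* Rz) = (φq : Rq →+* Rq).comp toQ := by
    apply MvPolynomial.ringHom_ext
    · intro a
      simp [toQ, φ, φq]
    · intro i
      fin_cases i <;>
        simp [toQ, φ, φq, a2, a3, a4, a6]
  exact DFunLike.congr_fun h p

/-- inclusion of first 3 variables -/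
def ι : R3 →ₐ[ℚ] Rq := aeval ![X 0, X 1, X 2]

/-- reduction map sending X3 to f/64 -/
def ρ : Rq →ₐ[ℚ] R3 :=
  aeval ![X 0, X 1, X 2, C (1/64 : ℚ) * (X 0 ^ 3 + 27 * X 1 ^ 2 - 48 * X 0 * X 2)]

lemma div_mem (p : Rq) : p - ι (ρ p) ∈ Ideal.span {gq} := by
  induction p using MvPolynomial.induction_on with
  | C a => simp [ι, ρ, Ideal.zero_mem]
  | add p q hp hq =>
      have : p + q - ι (ρ (p + q)) = (p - ι (ρ p)) + (q - ι (ρ q)) := by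
        simp only [map_add]; ring
      rw [this]; exact Ideal.add_mem _ hp hq
  | mul_X p i hp =>
      have key : ∀ j : Fin 4, X j - ι (ρ (X j)) ∈ Ideal.span {gq} := by
        intro j
        fin_cases j
        · simp [ι, ρ, Ideal.zero_mem]
        · simp [ι, ρ, Ideal.zero_mem]
        · simp [ι, ρ, Ideal.zero_mem]
        · show (X 3 : Rq) - ι (ρ (X 3)) ∈ Ideal.span {gq}
          have h64 : (C ((64 : ℚ)⁻¹) : Rq) * 64 = 1 := by
            rw [show ((64 : Rq)) = C (64 : ℚ) from (map_ofNat C 64).symm, ← C_mul]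
            norm_num
          have : (X 3 : Rq) - ι (ρ (X 3)) = C (1/64 : ℚ) * gq := by
            simp only [ι, ρ, gq, map_ofNat]
            simp only [aeval_X, Matrix.cons_val_three, Matrix.head_fin_const, Matrix.head_cons,
              Matrix.cons_val_zero, Matrix.cons_val_one, Matrix.cons_val_two]
            simp [map_ofNat]
            linear_combination -(X 3 * h64)
          rw [this]
          exact Ideal.mul_mem_left _ _ (Ideal.subset_span rfl)
      have : p * X i - ι (ρ (p * X i)) =
          (p - ι (ρ p)) * X i + ι (ρ p) * (X i - ι (ρ (X i))) := by
        simp only [map_mul]; ring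
      rw [this]
      exact Ideal.add_mem _ (Ideal.mul_mem_right _ _ hp) (Ideal.mul_mem_left _ _ (key i))

def esymQ : Fin 4 → Rq := fun i => esymm (Fin 4) ℚ ((i : ℕ) + 1)

lemma esym_inj : Function.Injective (aeval esymQ : MvPolynomial (Fin 4) ℚ →ₐ[ℚ] Rq) := by
  have h := MvPolynomial.esymmAlgHom_fin_injective (n := 4) (m := 4) ℚ le_rfl
  intro p q hpq
  apply h
  apply Subtype.ext
  rwa [esymmAlgHom_apply, esymmAlgHom_apply]

def U : R3 →ₐ[ℚ] MvPolynomial (Fin 4) ℚ :=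
  aeval ![8 * X 1 - 3 * X 0 ^ 2, 8 * X 2 - 4 * X 0 * X 1 + X 0 ^ 3,
    12 * X 3 - 3 * X 0 * X 2 + X 1 ^ 2]

def V : MvPolynomial (Fin 4) ℚ →ₐ[ℚ] R3 :=
  aeval ![0, C (8⁻¹ : ℚ) * X 0, C (8⁻¹ : ℚ) * X 1,
    C (12⁻¹ : ℚ) * X 2 - C (768⁻¹ : ℚ) * X 0 ^ 2]

lemma C_num_mul (q : ℚ) (p : R3) (n : ℕ) [n.AtLeastTwo] :
    (OfNat.ofNat n : R3) * (C q * p) = C (OfNat.ofNat n * q) * p := by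
  rw [← map_ofNat (C : ℚ →+* R3) n, ← mul_assoc, ← C_mul]

lemma VU : V.comp U = AlgHom.id ℚ R3 := by
  apply MvPolynomial.algHom_ext
  intro i
  fin_cases i
  · show V (U (X 0)) = X 0
    simp [U, V, map_ofNat]
    rw [C_num_mul]
    norm_num
  · show V (U (X 1)) = X 1
    simp [U, V, map_ofNat]
    rw [C_num_mul]
    norm_num
  · show V (U (X 2)) = X 2
    simp [U, V, map_ofNat]
    rw [mul_sub, C_num_mul, C_num_mul, mul_pow, ← C_pow]
    norm_num

lemma U_inj : Function.Injective U := by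
  intro p q h
  have := congrArg V h
  simpa [← AlgHom.comp_apply, VU] using this

lemma psi_eq : (φq.comp ι : R3 →ₐ[ℚ] Rq) = (aeval esymQ).comp U := by
  apply MvPolynomial.algHom_ext
  intro i
  fin_cases i
  · show φq (ι (X 0)) = aeval esymQ (U (X 0))
    simp [φq, ι, U, map_ofNat, a2, toQ, alpha2, sig, map_esymm, esymQ]
  · show φq (ι (X 1)) = aeval esymQ (U (X 1))
    simp [φq, ι, U, map_ofNat, a3, toQ, alpha3, sig, map_esymm, esymQ]
  · show φq (ι (X 2)) = aeval esymQ (U (X 2))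
    simp [φq, ι, U, map_ofNat, a4, toQ, alpha4, sig, map_esymm, esymQ]

lemma clear_denoms (h : Rq) : ∃ (N : ℤ) (h' : Rz), N ≠ 0 ∧ toQ h' = C (N : ℚ) * h := by
  induction h using MvPolynomial.induction_on with
  | C a =>
      refine ⟨(a.den : ℤ), C a.num, by exact_mod_cast a.den_nz, ?_⟩
      rw [toQ, map_C, ← C_mul]
      congr 1
      push_cast
      rw [mul_comm]
      exact_mod_cast (Rat.mul_den_eq_num a).symm
  | add p q hp hq =>
      obtain ⟨N1, h1, hN1, e1⟩ := hp
      obtain ⟨N2, h2, hN2, e2⟩ := hq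
      refine ⟨N1 * N2, C N2 * h1 + C N1 * h2, mul_ne_zero hN1 hN2, ?_⟩
      rw [toQ] at e1 e2 ⊢
      simp only [map_add, map_mul, map_C, e1, e2, Int.coe_castRingHom, Int.cast_mul]
      ring
  | mul_X p i hp =>
      obtain ⟨N, h', hN, e⟩ := hp
      refine ⟨N, h' * X i, hN, ?_⟩
      rw [toQ] at e ⊢
      rw [map_mul, e, map_X]
      ring


lemma g_not_dvd (q : ℤ) (hq : Prime q) : ¬ ((C q : Rz) ∣ g) := by
  rintro ⟨h, he⟩
  have := congrArg (eval ![1, 0, 0, 0]) he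
  simp [g, map_ofNat] at this
  exact hq.not_unit (isUnit_of_dvd_unit ⟨eval ![1, 0, 0, 0] h, this⟩ isUnit_one.neg)

lemma toQ_inj : Function.Injective toQ :=
  MvPolynomial.map_injective _ Int.cast_injective

lemma toQ_C (N : ℤ) : toQ (C N) = C (N : ℚ) := by
  rw [toQ, map_C, Int.coe_castRingHom]

lemma cancel_int : ∀ (n : ℕ) (N : ℤ), N.natAbs = n → N ≠ 0 → ∀ p : Rz,
    C N * p ∈ Ideal.span {g} → p ∈ Ideal.span {g} := by
  intro n
  induction n using Nat.strong_induction_on with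
  | _ n IH =>
    intro N hn hN p hmem
    by_cases hu : IsUnit N
    · rcases Int.isUnit_iff.mp hu with rfl | rfl
      · simpa using hmem
      · have : p = C (-1 : ℤ) * (C (-1) * p) := by
          rw [← mul_assoc, ← C_mul]; norm_num
        rw [this]
        exact Ideal.mul_mem_left _ _ hmem
    · have hne1 : N.natAbs ≠ 1 := fun h => hu (Int.isUnit_iff.mpr (Int.natAbs_eq_iff.mp h))
      obtain ⟨q, hq, hdvd⟩ := Int.exists_prime_and_dvd hne1
      obtain ⟨M, rfl⟩ := hdvd
      obtain ⟨h', he⟩ := Ideal.mem_span_singleton'.mp hmem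
      have hCq : Prime (C q : Rz) := (prime_C_iff (Fin 4)).mpr hq
      have hdvd : (C q : Rz) ∣ h' * g := ⟨C M * p, by rw [he, C_mul]; ring⟩
      rcases hCq.2.2 _ _ hdvd with h1 | h1
      · obtain ⟨h'', rfl⟩ := h1
        have hM : M ≠ 0 := by rintro rfl; exact hN (by ring)
        have he2 : h'' * g = C M * p := by
          have hC0 : (C q : Rz) ≠ 0 := fun h => hq.ne_zero (by
            simpa using (C_injective _ _).eq_iff.mp (h.trans (C_0).symm))
          apply mul_left_cancel₀ hC0
          rw [← mul_assoc, he, C_mul, mul_assoc]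
        refine IH M.natAbs ?_ M rfl hM p (Ideal.mem_span_singleton'.mpr ⟨h'', he2⟩)
        subst hn
        rw [Int.natAbs_mul]
        have h2 : 2 ≤ q.natAbs := (Int.prime_iff_natAbs_prime.mp hq).two_le
        have h0 : 0 < M.natAbs := Int.natAbs_pos.mpr hM
        nlinarith
      · exact absurd h1 (g_not_dvd q hq)

lemma psi_inj : Function.Injective (φq.comp ι : R3 →ₐ[ℚ] Rq) := by
  rw [psi_eq, AlgHom.coe_comp]
  exact Function.Injective.comp esym_inj U_inj

end

end KerAlpha

/-- The kernel of ℤ[y_2,y_3,y_4,y_6] → ℤ[v_1,…,v_4], y_i ↦ α_i, is the principal ideal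
generated by 64y_6 − y_2³ − 27y_3² + 48y_2y_4. (Here X 0 = y_2, X 1 = y_3, X 2 = y_4, X 3 = y_6.) -/
theorem ker_alpha_map :
    RingHom.ker (aeval ![alpha2, alpha3, alpha4, alpha6] :
        MvPolynomial (Fin 4) ℤ →ₐ[ℤ] MvPolynomial (Fin 4) ℤ) =
      Ideal.span {64 * X 3 - X 0 ^ 3 - 27 * X 1 ^ 2 + 48 * X 0 * X 2} := by
  open KerAlpha in
  apply le_antisymm
  · intro p hp
    rw [RingHom.mem_ker] at hp
    have hp' : φ p = 0 := hp
    have hq0 : φq (toQ p) = 0 := by rw [← toQ_phi, hp', map_zero]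
    have hdiv := div_mem (toQ p)
    have hker : Ideal.span {gq} ≤ RingHom.ker (φq : Rq →+* Rq) := by
      rw [Ideal.span_le, Set.singleton_subset_iff]
      exact phiq_gq
    have h2 : φq (ι (ρ (toQ p))) = 0 := by
      have := hker hdiv
      rw [RingHom.mem_ker] at this
      have : φq (toQ p) - φq (ι (ρ (toQ p))) = 0 := by
        rw [← map_sub]; exact this
      rw [hq0, zero_sub, neg_eq_zero] at this
      exact this
    have h3 : ρ (toQ p) = 0 := by
      apply psi_inj
      simpa [AlgHom.comp_apply] using h2
    have h4 : toQ p ∈ Ideal.span {gq} := by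
      have := hdiv
      rw [h3, map_zero, sub_zero] at this
      exact this
    obtain ⟨hQ, heQ⟩ := Ideal.mem_span_singleton'.mp h4
    obtain ⟨N, h', hN, he'⟩ := clear_denoms hQ
    have heq : toQ (h' * g) = toQ (C N * p) := by
      rw [map_mul, map_mul, toQ_g, he', toQ_C, mul_assoc, heQ]
    have heZ : h' * g = C N * p := toQ_inj heq
    exact cancel_int N.natAbs N rfl hN p (Ideal.mem_span_singleton'.mpr ⟨h', heZ⟩)
  · rw [Ideal.span_le, Set.singleton_subset_iff]
    exact phi_g
end

section
/- Let K_4 be the kernel of ∇ = Σ_{i=1}^4 ∂/∂v_i restricted to the ring of symmetric polynomials in ℤ[v_1,…,v_4]. If f ∈ K_4 and 2f lies in the subring ℤ[α_2,α_3,α_4,α_6], then f itself lies in ℤ[α_2,α_3,α_4,α_6]. -/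
open MvPolynomial

/-!
Since `α₃² = α₂³ + 2 (14 α₃² - 24 α₂ α₄ - 32 α₆)`, every element of `A = ℤ[α₂, α₃, α₄, α₆]` can
be written as `b₀ + b₁ α₃ + 2 c` with `b₀, b₁ ∈ ℤ[α₂, α₄, α₆]` and `c ∈ A`. If `2 f` is written so,
then `b₀ + b₁ α₃ ≡ 0 (mod 2)`, and it suffices to show that this forces the polynomials
`r₀, r₁` with `bᵢ = rᵢ(α₂, α₄, α₆)` to have even coefficients.

Modulo 2, `α₂, α₃, α₄, α₆` become `e₁², e₁³, e₁e₃ + e₂², e₁²e₄ + e₃² + e₁e₂e₃` in the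
algebraically independent elementary symmetric polynomials `eᵢ`. Setting `e₃ = 0` turns the even
ones into the monomials `e₁², e₂², e₁²e₄`, whose exponent vectors are linearly independent, so
they are algebraically independent; and the parity of the `e₁`-degree separates
`r₀(e₁², e₂², e₁²e₄)` from `r₁(e₁², e₂², e₁²e₄) e₁³`. Hence `r₀ ≡ r₁ ≡ 0 (mod 2)`.
-/

namespace Algebra

variable {R S : Type*} [CommSemiring R] [CommRing S] [Algebra R S]

theorem exists_eq_add_mul_add_mul_of_mem_adjoin_insert {s : Set S} {x b c m : S}
    (hb : b ∈ adjoin R s) (hc : c ∈ adjoin R (insert x s)) (hx : x ^ 2 = b + m * c) {a : S}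
    (ha : a ∈ adjoin R (insert x s)) :
    ∃ b₀ ∈ adjoin R s, ∃ b₁ ∈ adjoin R s, ∃ c' ∈ adjoin R (insert x s),
      a = b₀ + b₁ * x + m * c' := by
  have hle : adjoin R s ≤ adjoin R (insert x s) := adjoin_mono (Set.subset_insert x s)
  have hxA : x ∈ adjoin R (insert x s) := subset_adjoin (Set.mem_insert x s)
  induction ha using adjoin_induction with
  | mem y hy =>
    rcases hy with rfl | hy
    · exact ⟨0, zero_mem _, 1, one_mem _, 0, zero_mem _, by simp⟩
    · exact ⟨y, subset_adjoin hy, 0, zero_mem _, 0, zero_mem _, by simp⟩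
  | algebraMap r =>
    exact ⟨algebraMap R S r, Subalgebra.algebraMap_mem _ r, 0, zero_mem _, 0, zero_mem _,
      by simp⟩
  | add y z _ _ hy hz =>
    obtain ⟨b₀, hb₀, b₁, hb₁, c₁, hc₁, rfl⟩ := hy
    obtain ⟨b₀', hb₀', b₁', hb₁', c₁', hc₁', rfl⟩ := hz
    exact ⟨b₀ + b₀', add_mem hb₀ hb₀', b₁ + b₁', add_mem hb₁ hb₁', c₁ + c₁',
      add_mem hc₁ hc₁', by ring⟩
  | mul y z _ hz_mem hy hz =>
    obtain ⟨b₀, hb₀, b₁, hb₁, c₁, hc₁, rfl⟩ := hy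
    obtain ⟨b₀', hb₀', b₁', hb₁', c₁', hc₁', rfl⟩ := hz
    refine ⟨b₀ * b₀' + b₁ * b₁' * b, add_mem (mul_mem hb₀ hb₀') (mul_mem (mul_mem hb₁ hb₁') hb),
      b₀ * b₁' + b₁ * b₀', add_mem (mul_mem hb₀ hb₁') (mul_mem hb₁ hb₀'),
      b₁ * b₁' * c + c₁ * (b₀' + b₁' * x + m * c₁') + (b₀ + b₁ * x) * c₁',
      add_mem (add_mem (mul_mem (hle (mul_mem hb₁ hb₁')) hc) (mul_mem hc₁ hz_mem))
        (mul_mem (add_mem (hle hb₀) (mul_mem (hle hb₁) hxA)) hc₁'), ?_⟩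
    linear_combination b₁ * b₁' * hx

end Algebra

namespace MvPolynomial

section WeightedHomogeneous

variable {R M σ τ : Type*} [CommSemiring R] [AddCommMonoid M]

theorem IsWeightedHomogeneous.eq_zero_of_add_eq_zero {w : σ → M} {p q : MvPolynomial σ R}
    {m n : M} (hp : IsWeightedHomogeneous w p m) (hq : IsWeightedHomogeneous w q n) (hmn : m ≠ n)
    (h : p + q = 0) : p = 0 := by
  simpa [hp.weightedHomogeneousComponent_same, hq.weightedHomogeneousComponent_ne m hmn]
    using congrArg (weightedHomogeneousComponent w m) h

theorem isWeightedHomogeneous_aeval_zero {w : τ → M} {g : σ → MvPolynomial τ R}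
    (hg : ∀ i, IsWeightedHomogeneous w (g i) 0) (p : MvPolynomial σ R) :
    IsWeightedHomogeneous w (aeval g p) 0 := by
  induction p using induction_on with
  | C a => simpa using isWeightedHomogeneous_C w a
  | add p q hp hq => simpa using hp.add hq
  | mul_X p i hp => simpa using hp.mul (hg i)

end WeightedHomogeneous

variable {R σ τ : Type*} [CommRing R]

theorem algebraicIndependent_monomial {v : σ → τ →₀ ℕ}
    (hv : LinearIndependent ℕ v) : AlgebraicIndependent R fun i => monomial (v i) (1 : R) := by
  have : aeval (fun i => monomial (v i) (1 : R)) =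
      AddMonoidAlgebra.mapDomainAlgHom R R (Finsupp.linearCombination ℕ v).toAddMonoidHom := by
    refine algHom_ext fun i => ?_
    rw [aeval_X, AddMonoidAlgebra.mapDomainAlgHom_apply, X, ← single_eq_monomial,
      ← single_eq_monomial, AddMonoidAlgebra.mapDomain_single]
    simp
  rw [AlgebraicIndependent, this]
  exact AddMonoidAlgebra.mapDomain_injective hv

theorem algebraicIndependent_esymm [Fintype σ] {n : ℕ}
    (hn : n ≤ Fintype.card σ) : AlgebraicIndependent R fun i : Fin n => esymm σ R (i + 1) := by
  intro p q hpq
  apply esymmAlgHom_injective R hn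
  ext1
  simpa [esymmAlgHom_apply] using hpq

end MvPolynomial

local notation "ρ" => MvPolynomial.map (Int.castRingHom (ZMod 2))
local notation "ē" => esymm (Fin 4) (ZMod 2)

theorem two_dvd_iff_map_eq_zero {σ : Type*} (r : MvPolynomial σ ℤ) : 2 ∣ r ↔ ρ r = 0 := by
  rw [← C_dvd_iff_map_hom_eq_zero _ 2 (ZMod.intCast_zmod_eq_zero_iff_dvd · 2), map_ofNat]

theorem alpha3_sq :
    alpha3 ^ 2 = alpha2 ^ 3 + 2 * (14 * alpha3 ^ 2 - 24 * alpha2 * alpha4 - 32 * alpha6) := by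
  simp only [alpha2, alpha3, alpha4, alpha6]
  ring

theorem two_eq_zero_mod_two : (2 : MvPolynomial (Fin 4) (ZMod 2)) = 0 := CharTwo.two_eq_zero

theorem map_sig (k : ℕ) : ρ (sig k) = ē k := map_esymm _ _ _ _

theorem map_alpha2 : ρ alpha2 = ē 1 ^ 2 := by
  simp only [alpha2, map_sub, map_mul, map_pow, map_ofNat, map_sig]
  linear_combination (4 * ē 2 - 2 * ē 1 ^ 2) * two_eq_zero_mod_two

theorem map_alpha3 : ρ alpha3 = ē 1 ^ 3 := by
  simp only [alpha3, map_add, map_sub, map_mul, map_pow, map_ofNat, map_sig]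
  linear_combination (4 * ē 3 - 2 * ē 1 * ē 2) * two_eq_zero_mod_two

theorem map_alpha4 : ρ alpha4 = ē 1 * ē 3 + ē 2 ^ 2 := by
  simp only [alpha4, map_add, map_sub, map_mul, map_pow, map_ofNat, map_sig]
  linear_combination (6 * ē 4 - 2 * ē 1 * ē 3) * two_eq_zero_mod_two

theorem map_alpha6 : ρ alpha6 = ē 1 ^ 2 * ē 4 + ē 3 ^ 2 + ē 1 * ē 2 * ē 3 := by
  simp only [alpha6, map_add, map_sub, map_mul, map_pow, map_ofNat, map_sig]
  linear_combination (13 * ē 1 ^ 2 * ē 4 + 13 * ē 3 ^ 2 - 5 * ē 1 * ē 2 * ē 3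
    - 36 * ē 2 * ē 4 + ē 2 ^ 3) * two_eq_zero_mod_two

noncomputable def alphaEven : Fin 3 → MvPolynomial (Fin 4) ℤ := ![alpha2, alpha4, alpha6]

theorem range_aeval_alphaEven :
    (aeval alphaEven).range = Algebra.adjoin ℤ {alpha2, alpha4, alpha6} := by
  rw [← Algebra.adjoin_range_eq_range_aeval, alphaEven, Matrix.range_cons, Matrix.range_cons,
    Matrix.range_cons_empty]
  rfl

/-- `α₂, α₄, α₆` modulo 2, as polynomials in `e₁, …, e₄` (the variables `X 0, …, X 3`). -/
noncomputable def alphaEvenMod2 : Fin 3 → MvPolynomial (Fin 4) (ZMod 2) :=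
  ![X 0 ^ 2, X 0 * X 2 + X 1 ^ 2, X 0 ^ 2 * X 3 + X 2 ^ 2 + X 0 * X 1 * X 2]

theorem map_aeval_alphaEven (r : MvPolynomial (Fin 3) ℤ) :
    ρ (aeval alphaEven r) = aeval (fun i : Fin 4 => ē (i + 1)) (aeval alphaEvenMod2 (ρ r)) := by
  have map_alphaEven (j : Fin 3) :
      ρ (alphaEven j) = aeval (fun i : Fin 4 => ē (i + 1)) (alphaEvenMod2 j) := by
    fin_cases j <;> simp [alphaEven, alphaEvenMod2, map_alpha2, map_alpha4, map_alpha6]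
  rw [comp_aeval_apply, aeval_eq_bind₁, aeval_eq_bind₁, map_bind₁]
  simp only [map_alphaEven]

theorem map_alpha3_eq_aeval :
    ρ alpha3 = aeval (fun i : Fin 4 => ē (i + 1)) (X 0 ^ 3 : MvPolynomial (Fin 4) (ZMod 2)) := by
  simp [map_alpha3]

/-- The exponents of `e₁², e₂², e₁²e₄` in the variables `e₁, e₂, e₄`. -/
noncomputable def alphaEvenExponents : Fin 3 → Fin 3 →₀ ℕ :=
  ![Finsupp.single 0 2, Finsupp.single 1 2, Finsupp.single 0 2 + Finsupp.single 2 1]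

theorem aeval_alphaEvenMod2_eq_monomial (j : Fin 3) :
    aeval ![X 0, X 1, 0, X 2] (alphaEvenMod2 j) = monomial (alphaEvenExponents j) (1 : ZMod 2) := by
  fin_cases j <;>
    simp [alphaEvenMod2, alphaEvenExponents, monomial_single_add, ← X_pow_eq_monomial]

theorem linearIndependent_alphaEvenExponents : LinearIndependent ℕ alphaEvenExponents := by
  have coords (d : Fin 3 →₀ ℕ) :
      ⇑(Finsupp.linearCombination ℕ alphaEvenExponents d) = ![2 * d 0 + 2 * d 2, 2 * d 1, d 2] := by
    ext k
    fin_cases k <;>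
      simp [Finsupp.linearCombination_apply, Finsupp.sum_fintype, Fin.sum_univ_three,
        alphaEvenExponents, mul_comm]
  intro a b hab
  have := congrArg DFunLike.coe hab
  simp only [coords, Matrix.vecCons_inj] at this
  ext k
  fin_cases k <;> simp <;> omega

theorem eq_zero_of_aeval_monomial_add_mul_X_pow_three {p q : MvPolynomial (Fin 3) (ZMod 2)}
    (h : aeval (fun j => monomial (alphaEvenExponents j) (1 : ZMod 2)) p
      + aeval (fun j => monomial (alphaEvenExponents j) (1 : ZMod 2)) q * X 0 ^ 3 = 0) :
    p = 0 ∧ q = 0 := by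
  let w : Fin 3 → ZMod 2 := Pi.single 0 1
  have hmonomial (j : Fin 3) :
      IsWeightedHomogeneous w (monomial (alphaEvenExponents j) (1 : ZMod 2)) 0 := by
    apply isWeightedHomogeneous_monomial
    fin_cases j <;> simp [alphaEvenExponents, w, Finsupp.weight_single] <;> decide
  have hX : IsWeightedHomogeneous w (X 0 ^ 3 : MvPolynomial (Fin 3) (ZMod 2)) 1 :=
    (by decide : 3 • w 0 = 1) ▸ (isWeightedHomogeneous_X (ZMod 2) w 0).pow 3
  have hp := (isWeightedHomogeneous_aeval_zero hmonomial p).eq_zero_of_add_eq_zero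
    ((isWeightedHomogeneous_aeval_zero hmonomial q).mul hX) (by decide) h
  have hq : aeval (fun j => monomial (alphaEvenExponents j) (1 : ZMod 2)) q = 0 := by
    rw [hp, zero_add] at h
    exact (mul_eq_zero.1 h).resolve_right (pow_ne_zero _ (X_ne_zero _))
  have hind := algebraicIndependent_monomial (R := ZMod 2) linearIndependent_alphaEvenExponents
  exact ⟨hind.eq_zero_of_aeval_eq_zero _ hp, hind.eq_zero_of_aeval_eq_zero _ hq⟩

theorem eq_zero_of_aeval_alphaEvenMod2_add_mul_X_pow_three {p q : MvPolynomial (Fin 3) (ZMod 2)}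
    (h : aeval alphaEvenMod2 p + aeval alphaEvenMod2 q * X 0 ^ 3 = 0) : p = 0 ∧ q = 0 := by
  apply eq_zero_of_aeval_monomial_add_mul_X_pow_three
  have := congrArg (aeval ![X 0, X 1, 0, (X 2 : MvPolynomial (Fin 3) (ZMod 2))]) h
  simpa only [map_add, map_mul, map_pow, map_zero, comp_aeval_apply, aeval_X,
    aeval_alphaEvenMod2_eq_monomial, Matrix.cons_val_zero] using this

theorem two_dvd_of_two_dvd_aeval_add_aeval_mul_alpha3 {r₀ r₁ : MvPolynomial (Fin 3) ℤ}
    (h : 2 ∣ aeval alphaEven r₀ + aeval alphaEven r₁ * alpha3) : 2 ∣ r₀ ∧ 2 ∣ r₁ := by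
  rw [two_dvd_iff_map_eq_zero, map_add, map_mul, map_aeval_alphaEven, map_aeval_alphaEven,
    map_alpha3_eq_aeval, ← map_mul, ← map_add] at h
  rw [two_dvd_iff_map_eq_zero, two_dvd_iff_map_eq_zero]
  exact eq_zero_of_aeval_alphaEvenMod2_add_mul_X_pow_three
    ((algebraicIndependent_esymm (by simp)).eq_zero_of_aeval_eq_zero _ h)

theorem two_f_in_adjoin_general (f : MvPolynomial (Fin 4) ℤ)
    (h2 : 2 * f ∈ Algebra.adjoin ℤ {alpha2, alpha3, alpha4, alpha6}) :
    f ∈ Algebra.adjoin ℤ {alpha2, alpha3, alpha4, alpha6} := by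
  rw [Set.insert_comm] at h2 ⊢
  obtain ⟨b₀, hb₀, b₁, hb₁, c, hc, hdecomp⟩ :=
    Algebra.exists_eq_add_mul_add_mul_of_mem_adjoin_insert (by aesop) (by aesop) alpha3_sq h2
  rw [← range_aeval_alphaEven, AlgHom.mem_range] at hb₀ hb₁
  obtain ⟨r₀, rfl⟩ := hb₀
  obtain ⟨r₁, rfl⟩ := hb₁
  obtain ⟨⟨s₀, rfl⟩, ⟨s₁, rfl⟩⟩ := two_dvd_of_two_dvd_aeval_add_aeval_mul_alpha3 (r₀ := r₀)
    (r₁ := r₁) ⟨f - c, by rw [mul_sub, hdecomp]; ring⟩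
  have hf : f = aeval alphaEven s₀ + aeval alphaEven s₁ * alpha3 + c := by
    apply mul_left_cancel₀ (two_ne_zero (α := MvPolynomial (Fin 4) ℤ))
    rw [hdecomp, map_mul, map_mul, map_ofNat]
    ring
  have hB : (aeval alphaEven).range ≤ Algebra.adjoin ℤ (insert alpha3 {alpha2, alpha4, alpha6}) :=
    range_aeval_alphaEven ▸ Algebra.adjoin_mono (Set.subset_insert _ _)
  rw [hf]
  exact add_mem (add_mem (hB ⟨s₀, rfl⟩)
    (mul_mem (hB ⟨s₁, rfl⟩) (Algebra.subset_adjoin (Set.mem_insert _ _)))) hc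

/-- If f ∈ K_4 = ker(∇) ∩ Λ_4 and 2f ∈ ℤ[α_2,α_3,α_4,α_6], then f ∈ ℤ[α_2,α_3,α_4,α_6]. -/
theorem two_f_in_adjoin (f : MvPolynomial (Fin 4) ℤ) (hsym : f.IsSymmetric)
    (hker : ∑ i : Fin 4, pderiv i f = 0)
    (h2 : 2 * f ∈ Algebra.adjoin ℤ {alpha2, alpha3, alpha4, alpha6}) :
    f ∈ Algebra.adjoin ℤ {alpha2, alpha3, alpha4, alpha6} :=
  two_f_in_adjoin_general f h2
end

section
/- In ℤ/2[σ_1,σ_2,σ_3,σ_4] (the polynomial ring on the elementary symmetric polynomials in four variables over ℤ/2), the ideal of algebraic relations among the four elements σ_1², σ_1³, σ_1σ_3 + σ_2², and σ_1²σ_4 + σ_3² + σ_1σ_2σ_3 is the principal ideal generated by the relation (σ_1²)³ + (σ_1³)² = 0; i.e., the kernel of the map ℤ/2[a,b,c,d] → ℤ/2[σ_1,σ_2,σ_3,σ_4], a↦σ_1², b↦σ_1³, c↦σ_1σ_3+σ_2², d↦σ_1²σ_4+σ_3²+σ_1σ_2σ_3, is generated by a³ + b². -/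
/-!
Over any domain `R`, single out `b`: writing `A = R[a, c, d]`, the map factors as evaluation of
`A[b]` at `σ₁³` over the restriction `W : A → R[σ₁, …, σ₄]`, and `(σ₁³)² = W (a³)`. The map `W` is
injective, since specialising `σ₃ = 0` turns the images of `a, c, d` into monomials with
independent exponents. Dividing by the monic `b² - a³` leaves a remainder `r + s b` with
`W r + σ₁³ W s = 0`; squaring gives `r² = a³ s²`, which forces `s = 0` because the `a`-degree is
even on the left and odd on the right. So the kernel is generated by `b² - a³`, which is
`a³ + b²` in characteristic two.
-/

open MvPolynomial Function

theorem eq_zero_of_map_add_map_mul_eq_zero {R S : Type*} [CommRing R] [CommRing S]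
    {f : R →+* S} (hf : Injective f) {x : S} {c : R} (hx : x ^ 2 = f c)
    (hc : ∀ r s : R, r ^ 2 = c * s ^ 2 → s = 0) {r s : R} (h : f r + f s * x = 0) :
    r = 0 ∧ s = 0 := by
  have hsq : f (r ^ 2) = f (c * s ^ 2) := by
    rw [map_pow, map_mul, map_pow, ← hx, eq_neg_of_add_eq_zero_left h]
    ring
  obtain rfl := hc r s (hf hsq)
  rw [map_zero, zero_mul, add_zero, ← map_zero f] at h
  exact ⟨hf h, rfl⟩

open Polynomial in
theorem Polynomial.ker_eval₂RingHom_eq_span_X_sq_sub_C {R S : Type*} [CommRing R] [Nontrivial R]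
    [CommRing S] {f : R →+* S} (hf : Injective f) {x : S} {c : R} (hx : x ^ 2 = f c)
    (hc : ∀ r s : R, r ^ 2 = c * s ^ 2 → s = 0) :
    RingHom.ker (eval₂RingHom f x) = Ideal.span {X ^ 2 - C c} := by
  have hmonic : (X ^ 2 - C c).Monic := monic_X_pow_sub_C c two_ne_zero
  have hroot : eval₂ f x (X ^ 2 - C c) = 0 := by simp [hx]
  ext p
  rw [RingHom.mem_ker, coe_eval₂RingHom, Ideal.mem_span_singleton,
    ← modByMonic_eq_zero_iff_dvd hmonic]
  set q := p %ₘ (X ^ 2 - C c)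
  have hq : q = C (q.coeff 1) * X + C (q.coeff 0) := by
    apply eq_X_add_C_of_degree_le_one
    have := degree_modByMonic_lt p hmonic
    rw [degree_X_pow_sub_C two_pos] at this
    exact Order.le_of_lt_succ this
  have hp : eval₂ f x p = eval₂ f x q := by
    conv_lhs => rw [← modByMonic_add_div p (X ^ 2 - C c)]
    simp [q, hroot]
  rw [hp]
  constructor
  · intro h
    rw [hq] at h
    simp only [eval₂_add, eval₂_mul, eval₂_C, eval₂_X] at h
    obtain ⟨h0, h1⟩ := eq_zero_of_map_add_map_mul_eq_zero hf hx hc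
      (r := q.coeff 0) (s := q.coeff 1) (by rw [← h]; ring)
    rw [hq, h0, h1]
    simp
  · intro h
    rw [h, eval₂_zero]

theorem MvPolynomial.eq_zero_of_sq_eq_X_pow_mul_sq {σ R : Type*} [CommSemiring R]
    [NoZeroDivisors R] [Nontrivial R] (i : σ) {n : ℕ} (hn : Odd n) {r s : MvPolynomial σ R}
    (h : r ^ 2 = X i ^ n * s ^ 2) : s = 0 := by
  by_contra hs
  have hXs : X i ^ n * s ^ 2 ≠ 0 := mul_ne_zero (pow_ne_zero _ (X_ne_zero i)) (pow_ne_zero _ hs)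
  have hr : r ≠ 0 := by
    rintro rfl
    exact hXs (by rw [← h]; ring)
  have hdeg := congrArg (degreeOf i) h
  rw [degreeOf_pow_eq i r 2 hr, degreeOf_mul_eq (pow_ne_zero _ (X_ne_zero i)) (pow_ne_zero _ hs),
    degreeOf_pow_eq i s 2 hs, degreeOf_X_self_pow] at hdeg
  obtain ⟨k, rfl⟩ := hn
  omega

theorem MvPolynomial.injective_aeval_monomial {σ τ R : Type*} [CommSemiring R]
    {f : (σ →₀ ℕ) →+ (τ →₀ ℕ)} (hf : Injective f) :
    Injective (aeval (R := R) fun i ↦ monomial (f (Finsupp.single i 1)) (1 : R)) := by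
  have : (aeval (R := R) fun i ↦ monomial (f (Finsupp.single i 1)) (1 : R)) =
      AddMonoidAlgebra.mapDomainAlgHom R R f := by
    refine algHom_ext fun i ↦ ?_
    rw [aeval_X]
    exact AddMonoidAlgebra.mapDomain_single.symm
  rw [this]
  exact AddMonoidAlgebra.mapDomain_injective hf

theorem injective_aeval_X_zero_sq_X_one_sq_X_zero_sq_mul_X_two (R : Type*) [CommSemiring R] :
    Injective (aeval ![X 0 ^ 2, X 1 ^ 2, X 0 ^ 2 * X 2] :
      MvPolynomial (Fin 3) R →ₐ[R] MvPolynomial (Fin 3) R) := by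
  let d : (Fin 3 →₀ ℕ) →+ (Fin 3 →₀ ℕ) := (Finsupp.linearCombination ℕ ![Finsupp.single 0 2,
    Finsupp.single 1 2, Finsupp.single 0 2 + Finsupp.single 2 1]).toAddMonoidHom
  have hcoord : ∀ m, d m 0 = 2 * m 0 + 2 * m 2 ∧ d m 1 = 2 * m 1 ∧ d m 2 = m 2 := by
    intro m
    simp [d, Finsupp.linearCombination_apply, Finsupp.sum_fintype, Fin.sum_univ_three, mul_comm]
  have hd : Injective d := by
    intro m m' h
    obtain ⟨h0, h1, h2⟩ := hcoord m
    obtain ⟨h0', h1', h2'⟩ := hcoord m'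
    rw [h] at h0 h1 h2
    ext i
    fin_cases i <;> simp only [Fin.zero_eta, Fin.mk_one, Fin.reduceFinMk] <;> omega
  convert injective_aeval_monomial (R := R) hd using 3
  funext i
  fin_cases i <;> simp [d, monomial_single_add, ← X_pow_eq_monomial]

theorem injective_aeval_images_a_c_d (R : Type*) [CommSemiring R] :
    Injective (aeval ![X 0 ^ 2, X 0 * X 2 + X 1 ^ 2, X 0 ^ 2 * X 3 + X 2 ^ 2 + X 0 * X 1 * X 2] :
      MvPolynomial (Fin 3) R →ₐ[R] MvPolynomial (Fin 4) R) := by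
  let specialize : MvPolynomial (Fin 4) R →ₐ[R] MvPolynomial (Fin 3) R :=
    aeval ![X 0, X 1, 0, X 2]
  refine Injective.of_comp (f := specialize) ?_
  rw [← AlgHom.coe_comp, comp_aeval]
  convert injective_aeval_X_zero_sq_X_one_sq_X_zero_sq_mul_X_two R using 3
  funext i
  fin_cases i <;> simp [specialize]

theorem MvPolynomial.aeval_eq_eval₂_finSuccEquiv {R A : Type*} [CommSemiring R] [CommSemiring A]
    [Algebra R A] {n : ℕ} (v : Fin (n + 1) → A) (p : MvPolynomial (Fin (n + 1)) R) :
    aeval v p = Polynomial.eval₂ (aeval (R := R) (Fin.tail v) : MvPolynomial (Fin n) R →+* A)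
      (v 0) (finSuccEquiv R n p) := by
  induction p using MvPolynomial.induction_on with
  | C a => simp [finSuccEquiv_apply]
  | add p q hp hq => simp only [map_add, Polynomial.eval₂_add, hp, hq]
  | mul_X p i hp =>
    simp only [map_mul, Polynomial.eval₂_mul, hp, aeval_X]
    congr 1
    cases i using Fin.cases <;> simp [finSuccEquiv_X_zero, finSuccEquiv_X_succ, Fin.tail]

theorem ker_aeval_eq_span_X_one_sq_sub_X_zero_pow_three (R : Type*) [CommRing R] [IsDomain R] :
    RingHom.ker (aeval ![X 0 ^ 2, X 0 ^ 3, X 0 * X 2 + X 1 ^ 2,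
        X 0 ^ 2 * X 3 + X 2 ^ 2 + X 0 * X 1 * X 2] :
        MvPolynomial (Fin 4) R →ₐ[R] MvPolynomial (Fin 4) R) =
      Ideal.span {X 1 ^ 2 - X 0 ^ 3} := by
  let e := (renameEquiv R (Equiv.swap (0 : Fin 4) 1)).trans (finSuccEquiv R 3)
  have he : e (X 1 ^ 2 - X 0 ^ 3) = Polynomial.X ^ 2 - Polynomial.C (X 0 ^ 3) := by
    simp [e, finSuccEquiv_X_zero, ← finSuccEquiv_X_succ]
  have hswap : ![(X 0 : MvPolynomial (Fin 4) R) ^ 2, X 0 ^ 3, X 0 * X 2 + X 1 ^ 2,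
      X 0 ^ 2 * X 3 + X 2 ^ 2 + X 0 * X 1 * X 2] =
      ![(X 0 : MvPolynomial (Fin 4) R) ^ 3, X 0 ^ 2, X 0 * X 2 + X 1 ^ 2,
        X 0 ^ 2 * X 3 + X 2 ^ 2 + X 0 * X 1 * X 2] ∘ Equiv.swap (0 : Fin 4) 1 := by
    funext i
    fin_cases i <;> rfl
  let W : MvPolynomial (Fin 3) R →ₐ[R] MvPolynomial (Fin 4) R :=
    aeval ![X 0 ^ 2, X 0 * X 2 + X 1 ^ 2, X 0 ^ 2 * X 3 + X 2 ^ 2 + X 0 * X 1 * X 2]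
  have hker := Polynomial.ker_eval₂RingHom_eq_span_X_sq_sub_C
    (injective_aeval_images_a_c_d R : Injective W) (x := X 0 ^ 3) (c := X 0 ^ 3)
    (by simp only [AlgHom.toRingHom_eq_coe, RingHom.coe_coe, map_pow, aeval_X,
      Matrix.cons_val_zero]; ring)
    (fun r s h ↦ eq_zero_of_sq_eq_X_pow_mul_sq 0 (n := 3) (by decide) h)
  ext p
  rw [RingHom.mem_ker, hswap, ← aeval_rename, aeval_eq_eval₂_finSuccEquiv]
  change Polynomial.eval₂RingHom W.toRingHom (X 0 ^ 3) (e p) = 0 ↔ _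
  rw [← RingHom.mem_ker, hker, Ideal.mem_span_singleton, Ideal.mem_span_singleton, ← he,
    map_dvd_iff]

/-- The kernel of ℤ/2[a,b,c,d] → ℤ/2[σ_1,…,σ_4], a↦σ_1², b↦σ_1³, c↦σ_1σ_3+σ_2²,
d↦σ_1²σ_4+σ_3²+σ_1σ_2σ_3, is the principal ideal generated by a³ + b².
(Here X 0 = σ_1, X 1 = σ_2, X 2 = σ_3, X 3 = σ_4 in the target.) -/
theorem ker_mod2_relations :
    RingHom.ker (aeval
        ![(X 0 : MvPolynomial (Fin 4) (ZMod 2)) ^ 2,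
          X 0 ^ 3,
          X 0 * X 2 + X 1 ^ 2,
          X 0 ^ 2 * X 3 + X 2 ^ 2 + X 0 * X 1 * X 2] :
        MvPolynomial (Fin 4) (ZMod 2) →ₐ[ZMod 2] MvPolynomial (Fin 4) (ZMod 2)) =
      Ideal.span {X 0 ^ 3 + X 1 ^ 2} := by
  rw [ker_aeval_eq_span_X_one_sq_sub_X_zero_pow_three, CharTwo.sub_eq_add, add_comm]
end

section
/- For the element δ = ∏_{i≠j}(v_i − v_j) in ℤ[v_1,…,v_p] (p an odd prime), the ring homomorphism Θ_p: ℤ[v_1,…,v_p] → ℤ[η]/(pη) defined by Θ_p(v_i) = i·η satisfies Θ_p(δ) ≡ −η^{p²−p} mod (pη), which is nonzero in ℤ[η]/(pη). -/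
/-!
Θ_p sends each factor v_i − v_j to (i − j)η, so Θ_p(δ) = c·η^(p²−p) with c = ∏_{i≠j} (i − j) ∈ ℤ.
Modulo p, for fixed i the differences i − j (j ≠ i) run over the nonzero residues, whose product
is −1 by Wilson's theorem; hence c ≡ (−1)^p = −1 (mod p), and since pη = 0 this gives
Θ_p(δ) = −η^(p²−p). This is nonzero because every multiple of pη has all coefficients divisible
by p, while η^(p²−p) has a coefficient 1.
-/

open MvPolynomial

/-- The ring ℤ[η]/(pη). -/
abbrev Rq (p : ℕ) : Type := Polynomial ℤ ⧸ Ideal.span {(p : Polynomial ℤ) * Polynomial.X}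

/-- The class of η in ℤ[η]/(pη). -/
noncomputable def eta (p : ℕ) : Rq p :=
  Ideal.Quotient.mk (Ideal.span {(p : Polynomial ℤ) * Polynomial.X}) Polynomial.X

open Finset

theorem Finset.prod_offDiag_eq_prod_prod_erase {α M : Type*} [DecidableEq α] [CommMonoid M]
    (s : Finset α) (f : α × α → M) :
    ∏ x ∈ s.offDiag, f x = ∏ i ∈ s, ∏ j ∈ s.erase i, f (i, j) :=
  prod_finset_product _ _ _ fun x => by simp [mem_offDiag, ne_comm, and_comm]

theorem FiniteField.prod_erase_sub_eq_neg_one {K : Type*} [Field K] [Fintype K] [DecidableEq K]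
    (a : K) : ∏ b ∈ univ.erase a, (a - b) = -1 := by
  have hshift : ∏ b ∈ univ.erase a, (a - b) = ∏ c ∈ univ.erase 0, c :=
    prod_nbij' (a - ·) (a - ·) (by simp [sub_eq_zero, eq_comm]) (by simp)
      (by simp) (by simp) (by simp)
  have hunits : ∏ c ∈ univ.erase (0 : K), c = ∏ u : Kˣ, (u : K) :=
    (prod_subtype (p := (· ≠ 0)) _ (by simp) _).trans
      (Fintype.prod_equiv unitsEquivNeZero.symm _ _ fun _ => rfl)
  rw [hshift, hunits, ← Units.coe_prod, prod_univ_units_id_eq_neg_one, Units.val_neg, Units.val_one]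

theorem FiniteField.prod_offDiag_sub_eq_neg_one_pow {ι K : Type*} [Fintype ι] [DecidableEq ι]
    [Field K] [Fintype K] {f : ι → K} (hf : f.Bijective) :
    ∏ x ∈ univ.offDiag, (f x.1 - f x.2) = (-1) ^ Fintype.card ι := by
  classical
  have hrow (i : ι) : ∏ j ∈ univ.erase i, (f i - f j) = -1 := by
    rw [← prod_erase_sub_eq_neg_one (f i)]
    refine prod_nbij f (by simp [hf.injective.ne_iff]) hf.injective.injOn (fun b hb => ?_)
      fun _ _ => rfl
    obtain ⟨j, rfl⟩ := hf.surjective b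
    exact ⟨j, by simpa [hf.injective.ne_iff] using hb, rfl⟩
  rw [prod_offDiag_eq_prod_prod_erase, prod_congr rfl fun i _ => hrow i, prod_const, card_univ]

theorem ZMod.natCast_fin_bijective (n : ℕ) [NeZero n] :
    (fun i : Fin n => ((i : ℕ) : ZMod n)).Bijective :=
  Function.bijective_iff_has_inverse.mpr
    ⟨fun a => ⟨a.val, a.val_lt⟩, fun i => Fin.ext (ZMod.val_cast_of_lt i.isLt),
      fun a => ZMod.natCast_zmod_val a⟩

theorem Int.prod_offDiag_fin_sub_modEq_neg_one {p : ℕ} (hp : p.Prime) (hodd : Odd p) :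
    ∏ x ∈ (univ : Finset (Fin p)).offDiag, (((x.1 : ℕ) : ℤ) - (x.2 : ℕ)) ≡ -1 [ZMOD p] := by
  have := Fact.mk hp
  rw [← ZMod.intCast_eq_intCast_iff]
  push_cast
  rw [FiniteField.prod_offDiag_sub_eq_neg_one_pow (ZMod.natCast_fin_bijective p),
    Fintype.card_fin, hodd.neg_one_pow]

theorem MvPolynomial.aeval_prod_X_sub_X_mul {ι R S : Type*} [CommRing R] [CommRing S]
    [Algebra R S] (c : ι → S) (η : S) (s : Finset (ι × ι)) :
    aeval (fun i => c i * η) (∏ x ∈ s, (X x.1 - X x.2 : MvPolynomial ι R)) =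
      (∏ x ∈ s, (c x.1 - c x.2)) * η ^ s.card := by
  simp only [map_prod, map_sub, aeval_X, ← sub_mul, prod_mul_distrib, prod_const]

theorem intCast_mul_pow_eq_of_modEq {S : Type*} [CommRing S] {p : ℕ} {η : S}
    (hη : (p : S) * η = 0) {c d : ℤ} (h : c ≡ d [ZMOD p]) {N : ℕ} (hN : N ≠ 0) :
    (c : S) * η ^ N = d * η ^ N := by
  obtain ⟨k, hk⟩ := h.symm.dvd
  obtain ⟨M, rfl⟩ := Nat.exists_eq_add_one_of_ne_zero hN
  rw [← sub_eq_zero, ← sub_mul, ← Int.cast_sub, hk]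
  push_cast
  linear_combination (k * η ^ M) * hη

theorem natCast_mul_eta (p : ℕ) : (p : Rq p) * eta p = 0 := by
  rw [eta, ← map_natCast (Ideal.Quotient.mk _), ← map_mul, Ideal.Quotient.eq_zero_iff_mem]
  exact Ideal.mem_span_singleton_self _

theorem eta_pow_ne_zero {p : ℕ} (hp : p ≠ 1) (N : ℕ) : eta p ^ N ≠ 0 := by
  rw [eta, ← map_pow, Ne, Ideal.Quotient.eq_zero_iff_mem, Ideal.mem_span_singleton]
  intro h
  have hC : Polynomial.C (p : ℤ) ∣ Polynomial.X ^ N := dvd_of_mul_right_dvd (by simpa using h)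
  have := (Polynomial.C_dvd_iff_dvd_coeff _ _).mp hC N
  rw [Polynomial.coeff_X_pow_self] at this
  exact hp (by exact_mod_cast Int.eq_one_of_dvd_one (by positivity) this)

/-- For δ = ∏_{i≠j}(v_i − v_j) and Θ_p : ℤ[v_1,…,v_p] → ℤ[η]/(pη), v_i ↦ i·η
(for p an odd prime), one has Θ_p(δ) = −η^{p²−p}, which is nonzero. -/
theorem theta_delta (p : ℕ) (hp : p.Prime) (hodd : Odd p) :
    (aeval (fun i : Fin p => ((i : ℕ) + 1) • eta p)
        (∏ x ∈ Finset.univ.offDiag, (X x.1 - X x.2 : MvPolynomial (Fin p) ℤ)) =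
      -(eta p) ^ (p ^ 2 - p)) ∧ -(eta p) ^ (p ^ 2 - p) ≠ 0 := by
  have hweights : (fun i : Fin p => ((i : ℕ) + 1) • eta p) =
      fun i : Fin p => (((i : ℕ) + 1 : ℕ) : Rq p) * eta p := by
    simp only [nsmul_eq_mul]
  have hcard : (univ : Finset (Fin p)).offDiag.card = p ^ 2 - p := by simp [sq]
  have hN : p ^ 2 - p ≠ 0 := by
    have : p < p ^ 2 := by nlinarith [hp.two_le]
    omega
  have hdiff : ∏ x ∈ (univ : Finset (Fin p)).offDiag,
      ((((x.1 : ℕ) + 1 : ℕ) : Rq p) - (((x.2 : ℕ) + 1 : ℕ) : Rq p)) =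
      ((∏ x ∈ (univ : Finset (Fin p)).offDiag, (((x.1 : ℕ) : ℤ) - (x.2 : ℕ)) : ℤ) : Rq p) := by
    push_cast
    simp only [add_sub_add_right_eq_sub]
  refine ⟨?_, neg_ne_zero.mpr (eta_pow_ne_zero hp.ne_one _)⟩
  rw [hweights, aeval_prod_X_sub_X_mul, hcard, hdiff,
    intCast_mul_pow_eq_of_modEq (natCast_mul_eta p) (Int.prod_offDiag_fin_sub_modEq_neg_one hp hodd)
      hN, Int.cast_neg, Int.cast_one]
  exact neg_one_mul (eta p ^ (p ^ 2 - p))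
end

section
/- In the graded ℤ/2-algebra W = ℤ/2[x_2,x_3,x_5,x_8,x_9,x_{12}]/(x_2x_3, x_2x_5, x_2x_9, x_9² + x_3²x_{12} + x_5²x_8 + x_3³x_9 + x_3x_5³), the ℤ/2-linear derivation D determined by D(x_2)=D(x_3)=D(x_8)=D(x_{12})=0, D(x_5)=x_3², D(x_9)=x_5² and the Leibniz rule is well-defined (sends the defining relations to the ideal) and satisfies D∘D = 0. -/
open MvPolynomial

noncomputable def Jid : Ideal (MvPolynomial (Fin 6) (ZMod 2)) :=
  Ideal.span {X 0 * X 1, X 0 * X 2, X 0 * X 4,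
    X 4 ^ 2 + X 1 ^ 2 * X 5 + X 2 ^ 2 * X 3 + X 1 ^ 3 * X 4 + X 1 * X 2 ^ 3}

noncomputable def Dder :
    Derivation (ZMod 2) (MvPolynomial (Fin 6) (ZMod 2)) (MvPolynomial (Fin 6) (ZMod 2)) :=
  mkDerivation (ZMod 2) ![0, 0, X 1 ^ 2, 0, X 2 ^ 2, 0]

lemma DX0 : Dder (X 0) = 0 := by simp only [Dder, mkDerivation_X]; rfl
lemma DX1 : Dder (X 1) = 0 := by simp only [Dder, mkDerivation_X]; rfl
lemma DX2 : Dder (X 2) = X 1 ^ 2 := by simp only [Dder, mkDerivation_X]; rfl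
lemma DX3 : Dder (X 3) = 0 := by simp only [Dder, mkDerivation_X]; rfl
lemma DX4 : Dder (X 4) = X 2 ^ 2 := by simp only [Dder, mkDerivation_X]; rfl
lemma DX5 : Dder (X 5) = 0 := by simp only [Dder, mkDerivation_X]; rfl

lemma two_eq_zero : (2 : MvPolynomial (Fin 6) (ZMod 2)) = 0 := by
  exact_mod_cast CharTwo.two_eq_zero (R := MvPolynomial (Fin 6) (ZMod 2))

lemma DsqX : ∀ i : Fin 6, Dder (Dder (X i)) = 0 := by
  intro i
  fin_cases i
  · show Dder (Dder (X (0 : Fin 6))) = 0; rw [DX0]; simp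
  · show Dder (Dder (X (1 : Fin 6))) = 0; rw [DX1]; simp
  · show Dder (Dder (X (2 : Fin 6))) = 0
    rw [show Dder (X (2 : Fin 6)) = X 1 * X 1 by rw [DX2]; ring, Derivation.leibniz, DX1]
    simp
  · show Dder (Dder (X (3 : Fin 6))) = 0; rw [DX3]; simp
  · show Dder (Dder (X (4 : Fin 6))) = 0
    rw [show Dder (X (4 : Fin 6)) = X 2 * X 2 by rw [DX4]; ring, Derivation.leibniz, DX2]
    simp only [smul_eq_mul]
    linear_combination (X (2 : Fin 6) * X 1 ^ 2) * two_eq_zero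
  · show Dder (Dder (X (5 : Fin 6))) = 0; rw [DX5]; simp

lemma Dsq (f : MvPolynomial (Fin 6) (ZMod 2)) : Dder (Dder f) = 0 := by
  induction f using MvPolynomial.induction_on with
  | C a => simp
  | add p q hp hq => simp [hp, hq]
  | mul_X p i hp =>
    rw [Derivation.leibniz, smul_eq_mul, smul_eq_mul, map_add, Derivation.leibniz,
      Derivation.leibniz, hp, DsqX i, smul_eq_mul, smul_eq_mul, smul_eq_mul, smul_eq_mul]
    linear_combination (Dder p * Dder (X i)) * two_eq_zero

/-- D sends each defining relation of W into the defining ideal (so D is well-defined on W)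
and D∘D lands in the ideal (so D∘D = 0 on W). -/
theorem D_well_defined_and_square_zero :
    (∀ r ∈ ({X 0 * X 1, X 0 * X 2, X 0 * X 4,
        X 4 ^ 2 + X 1 ^ 2 * X 5 + X 2 ^ 2 * X 3 + X 1 ^ 3 * X 4 + X 1 * X 2 ^ 3} :
        Set (MvPolynomial (Fin 6) (ZMod 2))), Dder r ∈ Jid) ∧
      ∀ f : MvPolynomial (Fin 6) (ZMod 2), Dder (Dder f) ∈ Jid := by
  constructor
  · intro r hr
    have m1 : X 0 * X 1 ∈ Jid := Ideal.subset_span (by simp)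
    have m2 : X 0 * X 2 ∈ Jid := Ideal.subset_span (by simp)
    simp only [Set.mem_insert_iff, Set.mem_singleton_iff] at hr
    rcases hr with h | h | h | h <;> subst h
    · rw [Derivation.leibniz, DX0, DX1]; simp
    · have e : Dder (X 0 * X 2) = X 1 * (X 0 * X 1) := by
        rw [Derivation.leibniz, DX0, DX2, smul_eq_mul, smul_eq_mul]; ring
      rw [e]; exact Ideal.mul_mem_left _ _ m1
    · have e : Dder (X 0 * X 4) = X 2 * (X 0 * X 2) := by
        rw [Derivation.leibniz, DX0, DX4, smul_eq_mul, smul_eq_mul]; ring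
      rw [e]; exact Ideal.mul_mem_left _ _ m2
    · have e : Dder (X 4 ^ 2 + X 1 ^ 2 * X 5 + X 2 ^ 2 * X 3 + X 1 ^ 3 * X 4 + X 1 * X 2 ^ 3 :
          MvPolynomial (Fin 6) (ZMod 2)) = 0 := by
        rw [map_add, map_add, map_add, map_add]
        rw [Derivation.leibniz_pow, Derivation.leibniz, Derivation.leibniz_pow,
          Derivation.leibniz, Derivation.leibniz_pow, Derivation.leibniz,
          Derivation.leibniz_pow, Derivation.leibniz, Derivation.leibniz_pow,
          DX1, DX2, DX3, DX4, DX5]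
        simp only [smul_eq_mul, nsmul_eq_mul, smul_zero, mul_zero, zero_mul, add_zero, zero_add,
          Nat.cast_ofNat]
        have h3 : (3 : MvPolynomial (Fin 6) (ZMod 2)) = 1 := by linear_combination two_eq_zero
        push_cast
        rw [two_eq_zero, h3]
        linear_combination (X (2 : Fin 6) ^ 2 * X 1 ^ 3) * two_eq_zero
      rw [e]; exact Jid.zero_mem
  · intro f; rw [Dsq]; exact Jid.zero_mem
end

section
/- Define P: W → W on monomials m = n·x_3^i x_5^j x_9^k (n a monomial in x_2,x_8,x_{12}) by: P(m) = n·x_3^{i−2}x_5^{j+1}x_9^k if i ≥ 2; P(m) = n·x_3^i x_5^{j−2} x_9^{k+1} if i ≤ 1, j,k even, j ≠ 0; P(m) = n·x_3^i x_9^{k−2}(x_5x_{12} + x_8x_9 + x_3x_5x_9) if i ≤ 1, j = 0, k ≥ 2 even; P(m) = 0 otherwise. Then PD + DP = λ + id, where λ is the linear map fixing monomials of the form x_2^a x_8^b x_{12}^c and x_2^a x_8^b x_{12}^c x_3 and killing all other monomials. Consequently λ is chain homotopic to the identity on (W, D). -/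
open MvPolynomial

/-- The value of the chain homotopy P on the monomial with exponent vector m. -/
noncomputable def Pmono (m : Fin 6 →₀ ℕ) : MvPolynomial (Fin 6) (ZMod 2) :=
  let i := m 1
  let j := m 2
  let k := m 4
  let base : MvPolynomial (Fin 6) (ZMod 2) := X 0 ^ m 0 * X 3 ^ m 3 * X 5 ^ m 5
  if 2 ≤ i then base * X 1 ^ (i - 2) * X 2 ^ (j + 1) * X 4 ^ k
  else if j % 2 = 0 ∧ k % 2 = 0 ∧ j ≠ 0 then base * X 1 ^ i * X 2 ^ (j - 2) * X 4 ^ (k + 1)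
  else if j = 0 ∧ 2 ≤ k ∧ k % 2 = 0 then
    base * X 1 ^ i * X 4 ^ (k - 2) * (X 2 * X 5 + X 3 * X 4 + X 1 * X 2 * X 4)
  else 0

/-- The chain homotopy P, extended linearly over the monomial basis. -/
noncomputable def Pmap (f : MvPolynomial (Fin 6) (ZMod 2)) : MvPolynomial (Fin 6) (ZMod 2) :=
  ∑ m ∈ f.support, f.coeff m • Pmono m

/-- The projection λ, fixing the monomials x_2^a x_8^b x_12^c and x_2^a x_8^b x_12^c x_3
and killing all other monomials. -/
noncomputable def lamMap (f : MvPolynomial (Fin 6) (ZMod 2)) : MvPolynomial (Fin 6) (ZMod 2) :=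
  ∑ m ∈ f.support, f.coeff m •
    (if m 1 ≤ 1 ∧ m 2 = 0 ∧ m 4 = 0 then (monomial m 1 : MvPolynomial (Fin 6) (ZMod 2)) else 0)


/-!
`P` and `λ` are the linear extensions of their values on monomials, so it suffices to check
`PD + DP - (λ + id) ∈ Jid` on a monomial `n · x₃^i x₅^j x₉^k`. As `D` kills `x₂, x₈, x₁₂`, the
factor `n` rides along, and a case analysis on `i ≥ 2` and the parities of `j` and `k` shows that
`PD + DP = λ + id` holds on `x₃^i x₅^j x₉^k` already in the polynomial ring, with one exception:
for `i ≤ 1`, `j = 0` and `k ≥ 2` even, `DP` equals `x₃^i x₉^(k-2)` times the defining relation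
of `W` plus the monomial itself.
-/

theorem MvPolynomial.sum_support_coeff_smul_eq_constr {σ R M : Type*} [CommSemiring R]
    [AddCommMonoid M] [Module R M] (g : (σ →₀ ℕ) → M) (f : MvPolynomial σ R) :
    ∑ m ∈ f.support, f.coeff m • g m = (basisMonomials σ R).constr R g f := by
  rw [Module.Basis.constr_apply]
  rfl

theorem MvPolynomial.linearMap_mem_of_monomial_mem {σ R M : Type*} [CommSemiring R]
    [AddCommMonoid M] [Module R M] (φ : MvPolynomial σ R →ₗ[R] M) (p : Submodule R M)
    (h : ∀ m, φ (monomial m 1) ∈ p) (f : MvPolynomial σ R) : φ f ∈ p := by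
  have hspan : Submodule.span R (Set.range (basisMonomials σ R)) ≤ p.comap φ :=
    Submodule.span_le.2 <| Set.range_subset_iff.2 fun m => by simpa using h m
  exact hspan ((basisMonomials σ R).span_eq ▸ Submodule.mem_top)

local notation "Poly" => MvPolynomial (Fin 6) (ZMod 2)
local notation "x₂" => (X 0 : Poly)
local notation "x₃" => (X 1 : Poly)
local notation "x₅" => (X 2 : Poly)
local notation "x₈" => (X 3 : Poly)
local notation "x₉" => (X 4 : Poly)
local notation "x₁₂" => (X 5 : Poly)

noncomputable section

def constMon (a b c : ℕ) : Poly := x₂ ^ a * x₈ ^ b * x₁₂ ^ c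

def varMon (i j k : ℕ) : Poly := x₃ ^ i * x₅ ^ j * x₉ ^ k

def homotopyOnVar (i j k : ℕ) : Poly :=
  if 2 ≤ i then varMon (i - 2) (j + 1) k
  else if Even j ∧ Even k ∧ j ≠ 0 then varMon i (j - 2) (k + 1)
  else if j = 0 ∧ 2 ≤ k ∧ Even k then
    varMon i 0 (k - 2) * (x₅ * x₁₂ + x₈ * x₉ + x₃ * x₅ * x₉)
  else 0

def lamOnVar (i j k : ℕ) : Poly :=
  if i ≤ 1 ∧ j = 0 ∧ k = 0 then varMon i j k else 0

/-- `PD + DP - (λ + id)` at `x₃^i x₅^j x₉^k`; its first two terms are `P (D (x₃^i x₅^j x₉^k))`,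
see `Dder_varMon`. -/
def homotopyDefectOnVar (i j k : ℕ) : Poly :=
  (j : ZMod 2) • homotopyOnVar (i + 2) (j - 1) k + (k : ZMod 2) • homotopyOnVar i (j + 2) (k - 1)
    + Dder (homotopyOnVar i j k) - (lamOnVar i j k + varMon i j k)

def homotopyDefect : Poly →ₗ[ZMod 2] Poly :=
  let P := (basisMonomials (Fin 6) (ZMod 2)).constr (ZMod 2) Pmono
  let L := (basisMonomials (Fin 6) (ZMod 2)).constr (ZMod 2) fun m =>
    if m 1 ≤ 1 ∧ m 2 = 0 ∧ m 4 = 0 then (monomial m 1 : Poly) else 0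
  P ∘ₗ (Dder : Poly →ₗ[ZMod 2] Poly) + (Dder : Poly →ₗ[ZMod 2] Poly) ∘ₗ P - (L + LinearMap.id)

end

lemma Pmap_eq_constr :
    Pmap = (basisMonomials (Fin 6) (ZMod 2)).constr (ZMod 2) Pmono :=
  funext (sum_support_coeff_smul_eq_constr Pmono)

lemma homotopyDefect_apply (f : Poly) :
    homotopyDefect f = Pmap (Dder f) + Dder (Pmap f) - (lamMap f + f) := by
  simp only [homotopyDefect, Pmap_eq_constr, lamMap, sum_support_coeff_smul_eq_constr]
  rfl

lemma Dder_X_two : Dder x₅ = x₃ ^ 2 := mkDerivation_X _ _ _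

lemma Dder_X_four : Dder x₉ = x₅ ^ 2 := mkDerivation_X _ _ _

lemma Dder_X_of_ne {n : Fin 6} (h2 : n ≠ 2) (h4 : n ≠ 4) : Dder (X n) = 0 := by
  fin_cases n <;> simp_all [Dder, mkDerivation_X]

lemma Dder_constMon_mul (a b c : ℕ) (g : Poly) :
    Dder (constMon a b c * g) = constMon a b c * Dder g := by
  simp [constMon, Derivation.leibniz, Derivation.leibniz_pow, Dder_X_of_ne]

lemma Dder_varMon (i j k : ℕ) :
    Dder (varMon i j k) =
      (j : ZMod 2) • varMon (i + 2) (j - 1) k + (k : ZMod 2) • varMon i (j + 2) (k - 1) := by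
  simp only [varMon, Derivation.leibniz, Derivation.leibniz_pow, Dder_X_two, Dder_X_four,
    Dder_X_of_ne (show (1 : Fin 6) ≠ 2 by decide) (by decide), smul_zero]
  simp only [← Nat.cast_smul_eq_nsmul (ZMod 2), smul_eq_C_mul, smul_eq_mul, add_zero]
  ring

lemma monomial_one_eq (m : Fin 6 →₀ ℕ) :
    (monomial m 1 : Poly) = constMon (m 0) (m 3) (m 5) * varMon (m 1) (m 2) (m 4) := by
  rw [monomial_eq, Finsupp.prod_fintype _ _ fun _ => pow_zero _, Fin.prod_univ_six, constMon,
    varMon, C_1, one_mul]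
  ring

lemma Pmono_eq (m : Fin 6 →₀ ℕ) :
    Pmono m = constMon (m 0) (m 3) (m 5) * homotopyOnVar (m 1) (m 2) (m 4) := by
  simp only [Pmono, homotopyOnVar, constMon, varMon, Nat.even_iff]
  split_ifs <;> ring

lemma exists_exponent (a b c i j k : ℕ) :
    ∃ m : Fin 6 →₀ ℕ, m 0 = a ∧ m 1 = i ∧ m 2 = j ∧ m 3 = b ∧ m 4 = k ∧ m 5 = c :=
  ⟨Finsupp.equivFunOnFinite.symm ![a, i, j, b, k, c], by simp⟩

lemma Pmap_constMon_mul_varMon (a b c i j k : ℕ) :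
    Pmap (constMon a b c * varMon i j k) = constMon a b c * homotopyOnVar i j k := by
  obtain ⟨m, rfl, rfl, rfl, rfl, rfl, rfl⟩ := exists_exponent a b c i j k
  rw [← monomial_one_eq, ← Pmono_eq]
  simp [Pmap, support_monomial, coeff_monomial]

lemma lamMap_constMon_mul_varMon (a b c i j k : ℕ) :
    lamMap (constMon a b c * varMon i j k) = constMon a b c * lamOnVar i j k := by
  obtain ⟨m, rfl, rfl, rfl, rfl, rfl, rfl⟩ := exists_exponent a b c i j k
  rw [← monomial_one_eq, lamMap, support_monomial, if_neg one_ne_zero, Finset.sum_singleton,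
    coeff_monomial, if_pos rfl, one_smul, lamOnVar]
  split_ifs <;> simp [monomial_one_eq]

lemma homotopyDefect_constMon_mul_varMon (a b c i j k : ℕ) :
    homotopyDefect (constMon a b c * varMon i j k) = constMon a b c * homotopyDefectOnVar i j k := by
  rw [homotopyDefect_apply, Dder_constMon_mul, Dder_varMon, mul_add, mul_smul_comm, mul_smul_comm,
    Pmap_eq_constr, map_add, map_smul, map_smul, ← Pmap_eq_constr, Pmap_constMon_mul_varMon,
    Pmap_constMon_mul_varMon, Pmap_constMon_mul_varMon, Dder_constMon_mul,
    lamMap_constMon_mul_varMon, homotopyDefectOnVar]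
  simp only [mul_add, mul_sub, mul_smul_comm]

lemma homotopyDefectOnVar_eq_zero_of_two_le {i : ℕ} (j k : ℕ) (hi : 2 ≤ i) :
    homotopyDefectOnVar i j k = 0 := by
  obtain ⟨i, rfl⟩ := Nat.exists_eq_add_of_le' hi
  rcases Nat.even_or_odd' j with ⟨t, rfl | rfl⟩ <;> rcases Nat.even_or_odd' k with ⟨s, rfl | rfl⟩ <;>
  simp [homotopyDefectOnVar, homotopyOnVar, lamOnVar, Dder_varMon, one_add_one_eq_two,
    CharTwo.two_eq_zero] <;> grind

lemma homotopyDefectOnVar_eq_zero_of_ne_zero {i j : ℕ} (k : ℕ) (hi : i ≤ 1) (hj : j ≠ 0) :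
    homotopyDefectOnVar i j k = 0 := by
  obtain ⟨t, rfl | rfl⟩ : ∃ t, j = 2 * t + 2 ∨ j = 2 * t + 1 := ⟨(j - 1) / 2, by omega⟩ <;>
  rcases Nat.even_or_odd' k with ⟨s, rfl | rfl⟩ <;>
  simp [homotopyDefectOnVar, homotopyOnVar, lamOnVar, Dder_varMon, CharTwo.two_eq_zero, hi,
    show ¬2 ≤ i by omega, parity_simps]

lemma homotopyDefectOnVar_zero_eq_zero {i k : ℕ} (hi : i ≤ 1) (hk : ¬(2 ≤ k ∧ Even k)) :
    homotopyDefectOnVar i 0 k = 0 := by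
  obtain rfl | ⟨s, rfl⟩ : k = 0 ∨ Odd k := by grind
  all_goals simp [homotopyDefectOnVar, homotopyOnVar, lamOnVar, hi, show ¬2 ≤ i by omega,
    CharTwo.two_eq_zero, CharTwo.add_self_eq_zero, parity_simps]

lemma homotopyDefectOnVar_zero_two_mul_add_two {i : ℕ} (s : ℕ) (hi : i ≤ 1) :
    homotopyDefectOnVar i 0 (2 * s + 2) =
      varMon i 0 (2 * s) * (x₉ ^ 2 + x₃ ^ 2 * x₁₂ + x₅ ^ 2 * x₈ + x₃ ^ 3 * x₉ + x₃ * x₅ ^ 3) := by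
  have hP : homotopyOnVar i 0 (2 * s + 2) =
      varMon i 0 (2 * s) * (x₅ * x₁₂ + x₈ * x₉ + x₃ * x₅ * x₉) := by
    simp [homotopyOnVar, show ¬2 ≤ i by omega, parity_simps]
  have hD : Dder (x₅ * x₁₂ + x₈ * x₉ + x₃ * x₅ * x₉) =
      x₃ ^ 2 * x₁₂ + x₅ ^ 2 * x₈ + x₃ ^ 3 * x₉ + x₃ * x₅ ^ 3 := by
    simp only [map_add, Derivation.leibniz, Dder_X_two, Dder_X_four, smul_eq_mul,
      Dder_X_of_ne (show (1 : Fin 6) ≠ 2 by decide) (by decide),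
      Dder_X_of_ne (show (3 : Fin 6) ≠ 2 by decide) (by decide),
      Dder_X_of_ne (show (5 : Fin 6) ≠ 2 by decide) (by decide)]
    ring
  have hDvar : Dder (varMon i 0 (2 * s)) = 0 := by
    simp [Dder_varMon, CharTwo.two_eq_zero]
  have hk : ((2 * s + 2 : ℕ) : ZMod 2) = 0 := by
    simp [CharTwo.two_eq_zero]
  rw [homotopyDefectOnVar, Nat.cast_zero, zero_smul, zero_add, hk, zero_smul, zero_add, hP,
    Derivation.leibniz, hD, hDvar, smul_zero, add_zero, lamOnVar, if_neg (by omega), zero_add,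
    smul_eq_mul, CharTwo.sub_eq_add]
  simp only [varMon]
  ring

lemma homotopyDefectOnVar_mem (i j k : ℕ) : homotopyDefectOnVar i j k ∈ Jid := by
  rcases le_or_gt 2 i with hi | hi
  · simp [homotopyDefectOnVar_eq_zero_of_two_le j k hi]
  replace hi : i ≤ 1 := by omega
  rcases ne_or_eq j 0 with hj | rfl
  · simp [homotopyDefectOnVar_eq_zero_of_ne_zero k hi hj]
  by_cases hk : 2 ≤ k ∧ Even k
  · obtain ⟨s, rfl⟩ : ∃ s, k = 2 * s + 2 :=
      ⟨k / 2 - 1, by have := Nat.even_iff.1 hk.2; omega⟩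
    rw [homotopyDefectOnVar_zero_two_mul_add_two s hi]
    exact Jid.mul_mem_left _ (Ideal.subset_span (by simp))
  · simp [homotopyDefectOnVar_zero_eq_zero hi hk]

/-- PD + DP = λ + id holds in W = ℤ/2[x_2,…,x_12]/Jid, i.e. the difference lies in the
defining ideal; hence λ is chain homotopic to the identity on (W, D). -/
theorem homotopy_identity (f : MvPolynomial (Fin 6) (ZMod 2)) :
    Pmap (Dder f) + Dder (Pmap f) - (lamMap f + f) ∈ Jid := by
  rw [← homotopyDefect_apply]
  refine linearMap_mem_of_monomial_mem homotopyDefect (Jid.restrictScalars (ZMod 2)) (fun m => ?_) f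
  rw [monomial_one_eq, homotopyDefect_constMon_mul_varMon]
  exact Jid.mul_mem_left _ (homotopyDefectOnVar_mem _ _ _)
end

section
/- In the graded ring ℤ/2[w_2,w_3,w_4,w_5,w_6] (deg w_i = i), the four elements g_1 = w_3, g_2 = w_5², g_3 = w_4² + w_3w_5, g_4 = w_6² + w_3²w_6 + w_3w_4w_5 are algebraically independent over ℤ/2, and together with g_5 = w_3⁵ + w_3³w_6 + w_3²w_4w_5 + w_5³ they satisfy the relation g_1⁶g_4 + g_1⁴g_2g_3 + g_1⁵g_5 + g_2³ + g_5² = 0; moreover the ideal of all relations among g_1,…,g_5 in ℤ/2[g_1,…,g_5] (the kernel of the corresponding ring map from a polynomial ring in five variables) is the principal ideal generated by this relation. -/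
open MvPolynomial

-- Variables: X 0 = w_2, X 1 = w_3, X 2 = w_4, X 3 = w_5, X 4 = w_6, over ℤ/2.

noncomputable def g1 : MvPolynomial (Fin 5) (ZMod 2) := X 1
noncomputable def g2 : MvPolynomial (Fin 5) (ZMod 2) := X 3 ^ 2
noncomputable def g3 : MvPolynomial (Fin 5) (ZMod 2) := X 2 ^ 2 + X 1 * X 3
noncomputable def g4 : MvPolynomial (Fin 5) (ZMod 2) := X 4 ^ 2 + X 1 ^ 2 * X 4 + X 1 * X 2 * X 3
noncomputable def g5 : MvPolynomial (Fin 5) (ZMod 2) :=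
  X 1 ^ 5 + X 1 ^ 3 * X 4 + X 1 ^ 2 * X 2 * X 3 + X 3 ^ 3

/-!
Write `yᵢ` for `X (i - 1) : MvPolynomial (Fin 4) (ZMod 2)`, so that `aeval ![g1, g2, g3, g4]`
sends `yᵢ` to `gᵢ`. Specializing `w₃ = 0` sends `g₁, g₂, g₃, g₄` to the squares
`0, w₅², w₄², w₆²` and `g₅` to `w₅³`. Since `w₅³` is not a square, a relation
`A(g) + B(g) g₅ = 0` forces `A(0, w₅, w₄, w₆) = B(0, w₅, w₄, w₆) = 0`, i.e. `y₁ ∣ A` and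
`y₁ ∣ B`; cancelling `g₁ = w₃` gives a relation of the same shape, so `A` and `B` are divisible
by every power of `y₁` and vanish. Thus `g₁, …, g₄` are algebraically independent and `1, g₅`
are linearly independent over `𝔽₂[g₁, …, g₄]`. The relation is monic of degree `2` in the fifth
variable, so division by it reduces every relation among `g₁, …, g₅` to one of the form
`A(g) + B(g) g₅`.
-/

open Function

namespace Polynomial

theorem ker_eq_span_singleton_of_monic {A S : Type*} [CommRing A] [Semiring S] (f : A[X] →+* S)
    {r : A[X]} (hr : r.Monic) (hfr : f r = 0)
    (hinj : ∀ p : A[X], p.degree < r.degree → f p = 0 → p = 0) :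
    RingHom.ker f = Ideal.span {r} := by
  nontriviality A
  ext p
  rw [RingHom.mem_ker, Ideal.mem_span_singleton, ← modByMonic_eq_zero_iff_dvd hr]
  have hmod : f (p %ₘ r) = f p := by
    simpa [hfr] using congrArg f (modByMonic_add_div p r)
  exact ⟨fun hp => hinj _ (degree_modByMonic_lt p hr) (hmod.trans hp),
    fun hp => by rw [← hmod, hp, map_zero]⟩

end Polynomial

namespace MvPolynomial

section CommSemiring

variable {σ R : Type*} [CommSemiring R]

theorem eq_zero_of_forall_X_pow_dvd {i : σ} {p : MvPolynomial σ R} (h : ∀ n, X i ^ n ∣ p) :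
    p = 0 := by
  by_contra hp
  obtain ⟨q, hq⟩ := h (degreeOf i p + 1)
  have hq0 : q ≠ 0 := by rintro rfl; exact hp (by simpa using hq)
  have := degreeOf_mul_X_self_pow_eq_add_of_ne_zero i (degreeOf i p + 1) hq0
  rw [mul_comm, ← hq] at this
  omega

theorem aeval_pow_zmod {p : ℕ} [Fact p.Prime] {S : Type*} [CommSemiring S] [Algebra (ZMod p) S]
    (v : σ → S) (P : MvPolynomial σ (ZMod p)) :
    aeval (fun i => v i ^ p) P = aeval v P ^ p := by
  rw [← map_pow, ← expand_zmod, expand, aeval_bind₁]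
  simp

variable (R) (n : ℕ)

noncomputable def finSuccEquivLast :
    MvPolynomial (Fin (n + 1)) R ≃ₐ[R] Polynomial (MvPolynomial (Fin n) R) :=
  (renameEquiv R _root_.finSuccEquivLast).trans (optionEquivLeft R (Fin n))

variable {R n}

theorem finSuccEquivLast_X_castSucc (i : Fin n) :
    finSuccEquivLast R n (X i.castSucc) = Polynomial.C (X i) := by
  simp [finSuccEquivLast, optionEquivLeft_X_some]

theorem finSuccEquivLast_X_last :
    finSuccEquivLast R n (X (Fin.last n)) = Polynomial.X := by
  simp [finSuccEquivLast, optionEquivLeft_X_none]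

theorem eval₂_finSuccEquivLast {S : Type*} [CommSemiring S] [Algebra R S] (v : Fin (n + 1) → S)
    (P : MvPolynomial (Fin (n + 1)) R) :
    (finSuccEquivLast R n P).eval₂ (aeval (Fin.init v)).toRingHom (v (Fin.last n)) =
      aeval v P := by
  rw [AlgHom.toRingHom_eq_coe]
  induction P using MvPolynomial.induction_on with
  | C a =>
    rw [← algebraMap_eq, AlgEquiv.commutes, Polynomial.algebraMap_apply, Polynomial.eval₂_C]
    simp
  | add p q hp hq => simp [hp, hq]
  | mul_X p i hp =>
    cases i using Fin.lastCases with
    | last => simp [hp, finSuccEquivLast_X_last]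
    | cast j => simp [hp, finSuccEquivLast_X_castSucc, Fin.init]

end CommSemiring

section CommRing

variable {σ R : Type*} [CommRing R]

theorem X_dvd_sub_aeval_update_zero [DecidableEq σ] (i : σ) (p : MvPolynomial σ R) :
    X i ∣ p - aeval (update X i 0) p := by
  induction p using MvPolynomial.induction_on with
  | C a => simp
  | add p q hp hq => simpa [add_sub_add_comm] using dvd_add hp hq
  | mul_X p j hp =>
    rcases eq_or_ne j i with rfl | hj
    · simp
    · simpa [hj, ← sub_mul] using dvd_mul_of_dvd_left hp (X j)

theorem X_dvd_iff_aeval_update_zero [DecidableEq σ] {i : σ} {p : MvPolynomial σ R} :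
    X i ∣ p ↔ aeval (update (X : σ → MvPolynomial σ R) i 0) p = 0 := by
  refine ⟨?_, fun h => ?_⟩
  · rintro ⟨q, rfl⟩
    simp
  · simpa only [h, sub_zero] using X_dvd_sub_aeval_update_zero i p

theorem eq_zero_of_sq_eq_sq_mul_X_pow [IsDomain R] {i : σ} {a b : MvPolynomial σ R} {n : ℕ}
    (hn : Odd n) (h : a ^ 2 = b ^ 2 * X i ^ n) : b = 0 := by
  by_contra hb
  have ha : a ≠ 0 := by rintro rfl; simp_all
  have := congrArg (degreeOf i) h
  rw [degreeOf_pow_eq i a 2 ha, degreeOf_mul_X_self_pow_eq_add_of_ne_zero i n (pow_ne_zero 2 hb),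
    degreeOf_pow_eq i b 2 hb] at this
  obtain ⟨k, rfl⟩ := hn
  omega

end CommRing

end MvPolynomial

theorem g_relation : g1 ^ 6 * g4 + g1 ^ 4 * g2 * g3 + g1 ^ 5 * g5 + g2 ^ 3 + g5 ^ 2 = 0 := by
  simp only [g1, g2, g3, g4, g5]
  have h4 : (4 : MvPolynomial (Fin 5) (ZMod 2)) = 0 := by
    linear_combination 2 * CharTwo.two_eq_zero (R := MvPolynomial (Fin 5) (ZMod 2))
  ring_nf
  simp only [CharTwo.two_eq_zero, h4, mul_zero, add_zero]

noncomputable def evalW3Zero :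
    MvPolynomial (Fin 5) (ZMod 2) →ₐ[ZMod 2] MvPolynomial (Fin 5) (ZMod 2) :=
  aeval (update X 1 0)

theorem evalW3Zero_aeval_g (A : MvPolynomial (Fin 4) (ZMod 2)) :
    evalW3Zero (aeval ![g1, g2, g3, g4] A) = rename ![1, 3, 2, 4] (aeval (update X 0 0) A) ^ 2 := by
  have hsq : (fun i => evalW3Zero (![g1, g2, g3, g4] i)) =
      fun i => rename ![1, 3, 2, 4] (update X 0 0 i) ^ 2 := by
    funext i
    fin_cases i <;> simp [evalW3Zero, g1, g2, g3, g4, update]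
  rw [← AlgHom.comp_apply, comp_aeval, hsq, aeval_pow_zmod, ← AlgHom.comp_apply, comp_aeval]

theorem evalW3Zero_g5 : evalW3Zero g5 = X 3 ^ 3 := by
  simp [evalW3Zero, g5, update]

theorem X_zero_dvd_of_aeval_g_add_mul_g5_eq_zero {A B : MvPolynomial (Fin 4) (ZMod 2)}
    (h : aeval ![g1, g2, g3, g4] A + aeval ![g1, g2, g3, g4] B * g5 = 0) :
    X 0 ∣ A ∧ X 0 ∣ B := by
  have h' := congrArg evalW3Zero h
  rw [map_add, map_mul, evalW3Zero_aeval_g, evalW3Zero_aeval_g, evalW3Zero_g5, map_zero,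
    CharTwo.add_eq_zero] at h'
  have hB := eq_zero_of_sq_eq_sq_mul_X_pow (by decide) h'
  rw [hB, zero_pow two_ne_zero, zero_mul, pow_eq_zero_iff two_ne_zero] at h'
  have hinj : Injective (![1, 3, 2, 4] : Fin 4 → Fin 5) := by decide
  simp only [X_dvd_iff_aeval_update_zero]
  exact ⟨rename_injective _ hinj (by rw [h', map_zero]),
    rename_injective _ hinj (by rw [hB, map_zero])⟩

theorem eq_zero_of_aeval_g_add_mul_g5_eq_zero {A B : MvPolynomial (Fin 4) (ZMod 2)}
    (h : aeval ![g1, g2, g3, g4] A + aeval ![g1, g2, g3, g4] B * g5 = 0) :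
    A = 0 ∧ B = 0 := by
  suffices hpow : ∀ n (A B : MvPolynomial (Fin 4) (ZMod 2)),
      aeval ![g1, g2, g3, g4] A + aeval ![g1, g2, g3, g4] B * g5 = 0 →
        X 0 ^ n ∣ A ∧ X 0 ^ n ∣ B from
    ⟨eq_zero_of_forall_X_pow_dvd fun n => (hpow n A B h).1,
      eq_zero_of_forall_X_pow_dvd fun n => (hpow n A B h).2⟩
  intro n
  induction n with
  | zero => simp
  | succ n ih =>
    intro A B h
    obtain ⟨⟨A, rfl⟩, ⟨B, rfl⟩⟩ := X_zero_dvd_of_aeval_g_add_mul_g5_eq_zero h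
    have hg1 : g1 * (aeval ![g1, g2, g3, g4] A + aeval ![g1, g2, g3, g4] B * g5) = 0 := by
      simpa [mul_add, mul_assoc] using h
    obtain ⟨hA, hB⟩ := ih A B ((mul_eq_zero.mp hg1).resolve_left (X_ne_zero 1))
    rw [pow_succ']
    exact ⟨mul_dvd_mul_left _ hA, mul_dvd_mul_left _ hB⟩

theorem algebraicIndependent_g : AlgebraicIndependent (ZMod 2) ![g1, g2, g3, g4] := by
  rw [algebraicIndependent_iff]
  intro p hp
  exact (eq_zero_of_aeval_g_add_mul_g5_eq_zero (B := 0) (by simpa using hp)).1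

noncomputable def gRelation : MvPolynomial (Fin 5) (ZMod 2) :=
  X 0 ^ 6 * X 3 + X 0 ^ 4 * X 1 * X 2 + X 0 ^ 5 * X 4 + X 1 ^ 3 + X 4 ^ 2

theorem finSuccEquivLast_gRelation :
    finSuccEquivLast (ZMod 2) 4 gRelation =
      Polynomial.X ^ 2 + Polynomial.C (X 0 ^ 5) * Polynomial.X +
        Polynomial.C (X 0 ^ 6 * X 3 + X 0 ^ 4 * X 1 * X 2 + X 1 ^ 3) := by
  have hX : ∀ i, finSuccEquivLast (ZMod 2) 4 (X i) =
      ![Polynomial.C (X 0), Polynomial.C (X 1), Polynomial.C (X 2), Polynomial.C (X 3),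
        Polynomial.X] i := by
    intro i
    fin_cases i
    exacts [finSuccEquivLast_X_castSucc 0, finSuccEquivLast_X_castSucc 1,
      finSuccEquivLast_X_castSucc 2, finSuccEquivLast_X_castSucc 3, finSuccEquivLast_X_last]
  simp only [gRelation, map_add, map_mul, map_pow, hX, Matrix.cons_val_zero, Matrix.cons_val_one,
    Matrix.cons_val]
  ring

theorem eval₂_finSuccEquivLast_g (P : MvPolynomial (Fin 5) (ZMod 2)) :
    (finSuccEquivLast (ZMod 2) 4 P).eval₂ (aeval ![g1, g2, g3, g4]).toRingHom g5 =
      aeval ![g1, g2, g3, g4, g5] P := by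
  have hinit : Fin.init ![g1, g2, g3, g4, g5] = ![g1, g2, g3, g4] := by
    ext i
    fin_cases i <;> rfl
  have h := eval₂_finSuccEquivLast ![g1, g2, g3, g4, g5] P
  rwa [hinit] at h

theorem ker_aeval_g :
    RingHom.ker (aeval ![g1, g2, g3, g4, g5] :
        MvPolynomial (Fin 5) (ZMod 2) →ₐ[ZMod 2] MvPolynomial (Fin 5) (ZMod 2)) =
      Ideal.span {gRelation} := by
  set Φ := finSuccEquivLast (ZMod 2) 4
  set f := Polynomial.eval₂RingHom (aeval (R := ZMod 2) ![g1, g2, g3, g4]).toRingHom g5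
  have hmonic : (Φ gRelation).Monic := by rw [finSuccEquivLast_gRelation]; monicity!
  have hdeg : (Φ gRelation).degree = 2 := by rw [finSuccEquivLast_gRelation]; compute_degree!
  have hf : ∀ P, f (Φ P) = aeval ![g1, g2, g3, g4, g5] P := eval₂_finSuccEquivLast_g
  have hfr : f (Φ gRelation) = 0 := by
    rw [hf]
    simpa [gRelation] using g_relation
  have hinj : ∀ p, p.degree < (Φ gRelation).degree → f p = 0 → p = 0 := by
    intro p hp hfp
    rw [hdeg] at hp
    rw [Polynomial.eq_X_add_C_of_degree_le_one (Order.le_of_lt_succ hp)] at hfp ⊢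
    simp only [f, Polynomial.coe_eval₂RingHom, Polynomial.eval₂_add, Polynomial.eval₂_mul,
      Polynomial.eval₂_C, Polynomial.eval₂_X] at hfp
    obtain ⟨h0, h1⟩ := eq_zero_of_aeval_g_add_mul_g5_eq_zero (by rw [add_comm]; exact hfp)
    simp [h0, h1]
  ext P
  rw [RingHom.mem_ker, Ideal.mem_span_singleton, ← map_dvd_iff Φ, ← Ideal.mem_span_singleton,
    ← Polynomial.ker_eq_span_singleton_of_monic f hmonic hfr hinj, RingHom.mem_ker, hf]

/-- g_1, g_2, g_3, g_4 are algebraically independent; g_1⁶g_4 + g_1⁴g_2g_3 + g_1⁵g_5 + g_2³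
+ g_5² = 0; and the ideal of all relations among g_1,…,g_5 is the principal ideal generated
by this relation. -/
theorem relations_among_g :
    AlgebraicIndependent (ZMod 2) ![g1, g2, g3, g4] ∧
      g1 ^ 6 * g4 + g1 ^ 4 * g2 * g3 + g1 ^ 5 * g5 + g2 ^ 3 + g5 ^ 2 = 0 ∧
      RingHom.ker (aeval ![g1, g2, g3, g4, g5] :
          MvPolynomial (Fin 5) (ZMod 2) →ₐ[ZMod 2] MvPolynomial (Fin 5) (ZMod 2)) =
        Ideal.span
          {X 0 ^ 6 * X 3 + X 0 ^ 4 * X 1 * X 2 + X 0 ^ 5 * X 4 + X 1 ^ 3 + X 4 ^ 2} :=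
  ⟨algebraicIndependent_g, g_relation, ker_aeval_g⟩
end
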